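/- arXiv:math/0304078 — 8 statements merged into one kernel-verified Lean document; each statement's English description precedes it below -/
import Mathlib

section
/- Let V be a faithful finite-dimensional complex representation of a finite group G of dimension n, with G ⊆ U(n). Then fix_G(V) ≤ f (i.e., every nonidentity element of G has eigenspace for eigenvalue 1 of dimension at most f) if and only if the induced action of G on the homogeneous space U(n)/U(n-f-1) is free. -/
/-- The subgroup `U(k) ⊆ U(n)` of unitary matrices of block form `diag(A, I_{n-k})`,
described as a subset of the unitary group. -/
def blockSet (n k : ℕ) : Set (Matrix.unitaryGroup (Fin n) ℂ) :=
  {U | ∀ i j : Fin n, (k ≤ (i : ℕ) ∨ k ≤ (j : ℕ)) →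
    (U : Matrix (Fin n) (Fin n) ℂ) i j = if i = j then 1 else 0}

/-!
A unitary matrix lies in `U(k)` exactly when it fixes the standard basis vectors `e_j`, `j ≥ k`:
for a unitary matrix, fixed columns force the corresponding rows as well. Hence `g⁻¹ h g ∈ U(k)`
iff `h` fixes the `n - k` orthonormal vectors `g e_j`, `j ≥ k`, and such a `g` exists iff the
fixed space of `h` has dimension at least `n - k`: take for `g` the matrix whose columns are an
orthonormal basis of `ℂⁿ` with its last `n - k` vectors in the fixed space. For
`k = n - f - 1` this reads: `h` is conjugate into `U(n - f - 1)` iff `dim (ℂⁿ)^h ≥ f + 1`.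
-/

open Matrix Module Module.End

namespace Matrix.UnitaryGroup

variable {ι α : Type*} [Fintype ι] [DecidableEq ι] [CommRing α] [StarRing α]

theorem star_mulVec_eq_self_of_mulVec_eq_self (U : unitaryGroup ι α) {v : ι → α}
    (hv : (U : Matrix ι ι α) *ᵥ v = v) : star (U : Matrix ι ι α) *ᵥ v = v := by
  conv_lhs => rw [← hv]
  rw [mulVec_mulVec, star_mul_self, one_mulVec]

theorem conj_mulVec_eq_self_iff (g h : unitaryGroup ι α) (v : ι → α) :
    ((g⁻¹ * h * g : unitaryGroup ι α) : Matrix ι ι α) *ᵥ v = v ↔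
      (h : Matrix ι ι α) *ᵥ ((g : Matrix ι ι α) *ᵥ v) = (g : Matrix ι ι α) *ᵥ v := by
  have hconj : (g : Matrix ι ι α) * (g⁻¹ * h * g : unitaryGroup ι α) = h * g := by
    simpa using congrArg Subtype.val (show g * (g⁻¹ * h * g) = h * g by group)
  rw [← (mulVec_injective_of_isUnit (Unitary.isUnit_coe (U := g))).eq_iff, mulVec_mulVec, hconj,
    ← mulVec_mulVec]

end Matrix.UnitaryGroup

theorem Fin.card_setOf_le_val (n k : ℕ) : Fintype.card {j : Fin n | k ≤ (j : ℕ)} = n - k := by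
  rw [Fintype.card_subtype]
  simp only [Set.mem_ofPred_eq, ← not_lt, Finset.filter_not, Finset.card_univ_sdiff,
    Fin.card_filter_val_lt, Fintype.card_fin]
  omega

theorem exists_orthonormalBasis_forall_mem_of_card_le_finrank {𝕜 E ι : Type*} [RCLike 𝕜]
    [NormedAddCommGroup E] [InnerProductSpace 𝕜 E] [FiniteDimensional 𝕜 E] [Fintype ι]
    (card_ι : finrank 𝕜 E = Fintype.card ι) {s : Set ι} [Fintype s] (W : Submodule 𝕜 E)
    (hs : Fintype.card s ≤ finrank 𝕜 W) :
    ∃ b : OrthonormalBasis ι 𝕜 E, ∀ i ∈ s, b i ∈ W := by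
  obtain ⟨φ⟩ : Nonempty (s ↪ Fin (finrank 𝕜 W)) :=
    Function.Embedding.nonempty_of_card_le (by simpa using hs)
  let w : s → E := fun i => (stdOrthonormalBasis 𝕜 W (φ i) : E)
  have hw : Orthonormal 𝕜 w :=
    ((stdOrthonormalBasis 𝕜 W).orthonormal.comp φ φ.injective).comp_linearIsometry W.subtypeₗᵢ
  have hext : s.domRestrict (Function.extend Subtype.val w 0) = w :=
    funext (Subtype.val_injective.extend_apply w 0)
  obtain ⟨b, hb⟩ := (hext ▸ hw).exists_orthonormalBasis_extension_of_card_eq card_ι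
  refine ⟨b, fun i hi => ?_⟩
  rw [hb i hi, ← Subtype.coe_mk i hi, Subtype.val_injective.extend_apply]
  exact (stdOrthonormalBasis 𝕜 W (φ ⟨i, hi⟩)).2

variable {n : ℕ}

theorem mem_blockSet_iff_mulVec_single (U : unitaryGroup (Fin n) ℂ) (k : ℕ) :
    U ∈ blockSet n k ↔
      ∀ j : Fin n, k ≤ (j : ℕ) →
        (U : Matrix (Fin n) (Fin n) ℂ) *ᵥ Pi.single j 1 = Pi.single j 1 := by
  refine ⟨fun hU j hj => ?_, fun hU i j hij => ?_⟩
  · ext i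
    simp [hU i j (Or.inr hj), Pi.single_apply]
  rcases hij with hi | hj
  · have := congrFun (UnitaryGroup.star_mulVec_eq_self_of_mulVec_eq_self U (hU i hi)) j
    simpa [Pi.single_apply, apply_ite, @eq_comm _ j i] using congrArg star this
  · simpa [Pi.single_apply] using congrFun (hU j hj) i

theorem conj_mem_blockSet_iff (g h : unitaryGroup (Fin n) ℂ) (k : ℕ) :
    g⁻¹ * h * g ∈ blockSet n k ↔ ∀ j : Fin n, k ≤ (j : ℕ) →
      (g : Matrix (Fin n) (Fin n) ℂ) *ᵥ Pi.single j 1 ∈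
        eigenspace (toLin' (h : Matrix (Fin n) (Fin n) ℂ)) 1 := by
  simp only [mem_blockSet_iff_mulVec_single, UnitaryGroup.conj_mulVec_eq_self_iff,
    mem_eigenspace_iff, one_smul, toLin'_apply]

theorem le_finrank_eigenspace_of_conj_mem_blockSet {g h : unitaryGroup (Fin n) ℂ} {k : ℕ}
    (hg : g⁻¹ * h * g ∈ blockSet n k) :
    n - k ≤ finrank ℂ (eigenspace (toLin' (h : Matrix (Fin n) (Fin n) ℂ)) 1) := by
  have hcols : LinearIndependent ℂ
      fun j : {j : Fin n | k ≤ (j : ℕ)} => (g : Matrix (Fin n) (Fin n) ℂ) *ᵥ Pi.single j.1 1 :=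
    ((Pi.linearIndependent_single_one (Fin n) ℂ).comp _ Subtype.val_injective).map'
      (mulVecLin (g : Matrix (Fin n) (Fin n) ℂ))
      (LinearMap.ker_eq_bot.2 (mulVec_injective_of_isUnit Unitary.isUnit_coe))
  have hu : LinearIndependent ℂ fun j : {j : Fin n | k ≤ (j : ℕ)} =>
      (⟨_, (conj_mem_blockSet_iff g h k).1 hg j j.2⟩ :
        eigenspace (toLin' (h : Matrix (Fin n) (Fin n) ℂ)) 1) :=
    LinearIndependent.of_comp (Submodule.subtype _) hcols
  simpa only [Fin.card_setOf_le_val] using hu.fintype_card_le_finrank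

theorem exists_conj_mem_blockSet_of_le_finrank {h : unitaryGroup (Fin n) ℂ} {k : ℕ}
    (hd : n - k ≤ finrank ℂ (eigenspace (toLin' (h : Matrix (Fin n) (Fin n) ℂ)) 1)) :
    ∃ g : unitaryGroup (Fin n) ℂ, g⁻¹ * h * g ∈ blockSet n k := by
  have hcard : Fintype.card {j : Fin n | k ≤ (j : ℕ)} ≤
      finrank ℂ ((eigenspace (toLin' (h : Matrix (Fin n) (Fin n) ℂ)) 1).map
        ((WithLp.linearEquiv 2 ℂ (Fin n → ℂ)).symm :
          (Fin n → ℂ) →ₗ[ℂ] EuclideanSpace ℂ (Fin n))) := by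
    rwa [LinearEquiv.finrank_map_eq, Fin.card_setOf_le_val]
  obtain ⟨b, hb⟩ := exists_orthonormalBasis_forall_mem_of_card_le_finrank
    finrank_euclideanSpace _ hcard
  let g : unitaryGroup (Fin n) ℂ :=
    ⟨_, (EuclideanSpace.basisFun (Fin n) ℂ).toMatrix_orthonormalBasis_mem_unitary b⟩
  have hg : ∀ j, (g : Matrix (Fin n) (Fin n) ℂ) *ᵥ Pi.single j 1 = b j := by
    intro j; ext i; simp [g, Basis.toMatrix_apply]
  refine ⟨g, (conj_mem_blockSet_iff g h k).2 fun j hj => ?_⟩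
  simpa [hg, Submodule.mem_map_equiv] using hb j hj

theorem exists_conj_mem_blockSet_iff (h : unitaryGroup (Fin n) ℂ) (k : ℕ) :
    (∃ g : unitaryGroup (Fin n) ℂ, g⁻¹ * h * g ∈ blockSet n k) ↔
      n - k ≤ finrank ℂ (eigenspace (toLin' (h : Matrix (Fin n) (Fin n) ℂ)) 1) :=
  ⟨fun ⟨_, hg⟩ => le_finrank_eigenspace_of_conj_mem_blockSet hg,
    exists_conj_mem_blockSet_of_le_finrank⟩

theorem fixity_le_iff_free_action_general (n f : ℕ) (hf : f + 1 ≤ n)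
    (G : Subgroup (Matrix.unitaryGroup (Fin n) ℂ)) :
    (∀ g ∈ G, g ≠ 1 →
      Module.finrank ℂ
        (Module.End.eigenspace
          (Matrix.toLin' (g : Matrix (Fin n) (Fin n) ℂ)) 1) ≤ f) ↔
    (∀ h ∈ G, h ≠ 1 → ∀ g : Matrix.unitaryGroup (Fin n) ℂ,
      g⁻¹ * h * g ∉ blockSet n (n - f - 1)) := by
  have hk : n - (n - f - 1) = f + 1 := by omega
  refine forall₂_congr fun h _ => imp_congr_right fun _ => ?_
  rw [← not_exists, exists_conj_mem_blockSet_iff, hk, not_le, Nat.lt_succ_iff]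

/-- For a finite subgroup `G ⊆ U(n)` (a faithful `n`-dimensional unitary
representation), `fix_G(V) ≤ f`, i.e. every nonidentity element of `G` has eigenspace
for eigenvalue `1` of dimension at most `f`, if and only if the left-multiplication
action of `G` on the coset space `U(n)/U(n-f-1)` is free (no nonidentity element of `G`
is conjugate into `U(n-f-1)`). -/
theorem fixity_le_iff_free_action (n f : ℕ) (hf : f + 1 ≤ n)
    (G : Subgroup (Matrix.unitaryGroup (Fin n) ℂ)) [Finite G] :
    (∀ g ∈ G, g ≠ 1 →
      Module.finrank ℂ
        (Module.End.eigenspace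
          (Matrix.toLin' (g : Matrix (Fin n) (Fin n) ℂ)) 1) ≤ f) ↔
    (∀ h ∈ G, h ≠ 1 → ∀ g : Matrix.unitaryGroup (Fin n) ℂ,
      g⁻¹ * h * g ∉ blockSet n (n - f - 1)) :=
  fixity_le_iff_free_action_general n f hf G
end

section
/- Suppose G ⊆ U(n) is a finite group such that the action of G on U(n)/U(n-f-1) is free. Then every isotropy subgroup of the G-action on U(n)/U(n-f) acts freely on the sphere S^{2(n-f)-1}, and hence has rank at most one (every abelian subgroup is cyclic). -/
/-!
An isotropy element `h` at `gU(n-f)` acts on `ℂ^{n-f}` through `g⁻¹hg ∈ U(n-f)`. If it fixed a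
nonzero vector `v ∈ ℂ^{n-f}`, a unitary change of basis inside `U(n-f)` sending `e_{n-f}` to
`v / ‖v‖` would conjugate `g⁻¹hg` into `U(n-f-1)`, contradicting freeness on `U(n)/U(n-f-1)`.
An abelian subgroup of the isotropy group thus acts on `ℂ^{n-f} ≠ 0` by commuting operators
without nonzero fixed vectors; on a common eigenvector it acts by a character `H → ℂˣ` that is
injective, so `H` is a finite subgroup of `ℂˣ`, hence cyclic.
-/

open Matrix Module

theorem Module.End.exists_forall_apply_eq_smul_of_commute {K V ι : Type*} [Field K]
    [IsAlgClosed K] [AddCommGroup V] [Module K V] [FiniteDimensional K V] [Nontrivial V]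
    (f : ι → End K V) (hf : ∀ i j, Commute (f i) (f j)) :
    ∃ v ≠ (0 : V), ∃ μ : ι → K, ∀ i, f i v = μ i • v := by
  obtain ⟨W, ⟨hW0, hWf⟩, hWmin⟩ := wellFounded_lt.has_min
    {W : Submodule K V | W ≠ ⊥ ∧ ∀ i, Set.MapsTo (f i) W W}
    ⟨⊤, top_ne_bot, fun _ => Set.mapsTo_univ _ _⟩
  -- A minimal nonzero invariant subspace lies in one eigenspace of each `f i`, since the
  -- intersection with an eigenspace of `f i` is again invariant.
  have hWeigen : ∀ i, ∃ μ, W ≤ (f i).eigenspace μ := by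
    intro i
    have : Nontrivial W := Submodule.nontrivial_iff_ne_bot.mpr hW0
    obtain ⟨μ, hμ⟩ := exists_eigenvalue ((f i).restrict (hWf i))
    obtain ⟨w, hw⟩ := hμ.exists_hasEigenvector
    refine ⟨μ, by_contra fun hle => hWmin (W ⊓ (f i).eigenspace μ) ⟨?_, fun j => ?_⟩
      (inf_lt_left.mpr hle)⟩
    · rw [Submodule.ne_bot_iff]
      refine ⟨w, Submodule.mem_inf.mpr ⟨w.2, mem_eigenspace_iff.mpr ?_⟩, by simpa using hw.2⟩
      exact congrArg Subtype.val hw.apply_eq_smul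
    · rw [Submodule.coe_inf]
      exact (hWf j).inter_inter (mapsTo_genEigenspace_of_comm (hf i j) μ 1)
  choose μ hμ using hWeigen
  obtain ⟨v, hvW, hv0⟩ := Submodule.exists_mem_ne_zero_of_ne_bot hW0
  exact ⟨v, hv0, μ, fun i => mem_eigenspace_iff.mp (hμ i hvW)⟩

theorem Representation.isCyclic_of_fixedPointFree {K G V : Type*} [Field K] [IsAlgClosed K]
    [CommGroup G] [Finite G] [AddCommGroup V] [Module K V] [FiniteDimensional K V]
    [Nontrivial V] (ρ : Representation K G V) (hfree : ∀ x ≠ 1, ∀ v, ρ x v = v → v = 0) :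
    IsCyclic G := by
  obtain ⟨v, hv, μ, hμ⟩ := End.exists_forall_apply_eq_smul_of_commute ρ fun x y => by
    rw [Commute, SemiconjBy, ← map_mul, mul_comm, map_mul]
  have hμ_inj := smul_left_injective K hv
  let χ : G →* K :=
    { toFun := μ
      map_one' := hμ_inj <| by simp only [← hμ, map_one, one_smul, End.one_apply]
      map_mul' := fun x y => hμ_inj <| by
        change μ (x * y) • v = (μ x * μ y) • v
        rw [← hμ, map_mul, End.mul_apply, hμ, map_smul, hμ, smul_smul, mul_comm] }
  refine isCyclic_of_injective_ringHom χ ((injective_iff_map_eq_one χ).mpr fun x hx => ?_)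
  by_contra hx1
  exact hv (hfree x hx1 v (by rw [hμ]; simpa [χ] using congrArg (· • v) hx))

theorem Orthonormal.exists_unitaryGroup_mulVec_single {ι 𝕜 : Type*} [Fintype ι]
    [DecidableEq ι] [RCLike 𝕜] {s : Set ι} {w : ι → EuclideanSpace 𝕜 ι}
    (hw : Orthonormal 𝕜 (s.domRestrict w)) :
    ∃ W : unitaryGroup ι 𝕜, ∀ j ∈ s, (W : Matrix ι ι 𝕜) *ᵥ Pi.single j 1 = w j := by
  obtain ⟨b, hb⟩ := hw.exists_orthonormalBasis_extension_of_card_eq finrank_euclideanSpace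
  refine ⟨⟨(EuclideanSpace.basisFun ι 𝕜).toBasis.toMatrix b,
    OrthonormalBasis.toMatrix_orthonormalBasis_mem_unitary _ _⟩, fun j hj => ?_⟩
  ext i
  simp [mulVec_single, Module.Basis.toMatrix_apply, hb j hj]

/-- The coordinate subspace `ℂ^k ⊆ ℂ^n` on which `U(k)` acts. -/
def blockSubspace (n k : ℕ) : Submodule ℂ (Fin n → ℂ) where
  carrier := {v | ∀ i : Fin n, k ≤ (i : ℕ) → v i = 0}
  add_mem' hv hw i hi := by simp [hv i hi, hw i hi]
  zero_mem' _ _ := rfl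
  smul_mem' c v hv i hi := by simp [hv i hi]

section Block

variable {n k : ℕ}

theorem nontrivial_blockSubspace (hn : 0 < n) (hk : 0 < k) : Nontrivial (blockSubspace n k) := by
  refine Submodule.nontrivial_iff_ne_bot.mpr ((Submodule.ne_bot_iff _).mpr
    ⟨Pi.single ⟨0, hn⟩ 1, fun i hi => ?_, by simp⟩)
  have : i ≠ ⟨0, hn⟩ := fun h => by simp [h] at hi; omega
  simp [this]

theorem mem_blockSet_iff {U : unitaryGroup (Fin n) ℂ} :
    U ∈ blockSet n k ↔ ∀ j : Fin n, k ≤ (j : ℕ) →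
      (U : Matrix (Fin n) (Fin n) ℂ) *ᵥ Pi.single j 1 = Pi.single j 1 := by
  refine ⟨fun hU j hj => ?_, fun hU i j hij => ?_⟩
  · ext i
    simp [mulVec_single, hU i j (Or.inr hj), Pi.single_apply]
  rcases hij with hi | hj
  · -- the `i`-th row of `U` is the `i`-th column of `U⁻¹ = Uᴴ`, which also fixes `e_i`
    have hrow : star (U : Matrix (Fin n) (Fin n) ℂ) *ᵥ Pi.single i 1 = Pi.single i 1 := by
      conv_lhs => rw [← hU i hi, mulVec_mulVec, UnitaryGroup.star_mul_self, one_mulVec]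
    simpa [mulVec_single, Pi.single_apply, eq_comm] using congrArg star (congrFun hrow j)
  · simpa [mulVec_single, Pi.single_apply] using congrFun (hU j hj) i

theorem mulVec_mem_blockSubspace {U : unitaryGroup (Fin n) ℂ} (hU : U ∈ blockSet n k)
    {v : Fin n → ℂ} (hv : v ∈ blockSubspace n k) :
    (U : Matrix (Fin n) (Fin n) ℂ) *ᵥ v ∈ blockSubspace n k := fun i hi => by
  simp [mulVec, dotProduct, hU i _ (Or.inl hi), hv i hi]

theorem exists_conj_mem_blockSet_of_mulVec_eq_self (hk : k < n) {M : unitaryGroup (Fin n) ℂ}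
    (hM : M ∈ blockSet n (k + 1)) {v : Fin n → ℂ} (hv : v ∈ blockSubspace n (k + 1))
    (hv0 : v ≠ 0) (hfix : (M : Matrix (Fin n) (Fin n) ℂ) *ᵥ v = v) :
    ∃ W : unitaryGroup (Fin n) ℂ, W⁻¹ * M * W ∈ blockSet n k := by
  set x : EuclideanSpace ℂ (Fin n) := WithLp.toLp 2 v
  have hx0 : x ≠ 0 := fun h => hv0 (congrArg WithLp.ofLp h)
  set u := ((‖x‖ : ℂ)⁻¹) • x
  have hu : ‖u‖ = 1 := norm_smul_inv_norm hx0
  have hne : ∀ j : Fin n, j ≠ ⟨k, hk⟩ → k ≤ (j : ℕ) → k + 1 ≤ (j : ℕ) := fun j hjk hj => by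
    have : (j : ℕ) ≠ k := fun h => hjk (Fin.ext h)
    omega
  have hu_supp : ∀ j : Fin n, j ≠ ⟨k, hk⟩ → k ≤ (j : ℕ) → u j = 0 := fun j hjk hj => by
    simp [u, x, hv j (hne j hjk hj)]
  -- the columns `k, k+1, …` of the change of basis `W`: `u`, then the standard basis vectors
  set w := Function.update (fun j => EuclideanSpace.single j (1 : ℂ)) ⟨k, hk⟩ u
  have hw : Orthonormal ℂ ({j : Fin n | k ≤ j}.domRestrict w) := by
    rw [orthonormal_iff_ite]
    rintro ⟨i, hi⟩ ⟨j, hj⟩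
    simp only [Set.domRestrict, Subtype.mk.injEq]
    rcases eq_or_ne i ⟨k, hk⟩ with rfl | hik <;> rcases eq_or_ne j ⟨k, hk⟩ with rfl | hjk
    · simp [w, hu]
    · simp [w, hjk, hjk.symm, EuclideanSpace.inner_single_right, hu_supp j hjk hj]
    · simp [w, hik, EuclideanSpace.inner_single_left, hu_supp i hik hi]
    · simp [w, hik, hjk, EuclideanSpace.inner_single_left]
  obtain ⟨W, hW⟩ := hw.exists_unitaryGroup_mulVec_single
  have hMw : ∀ j : Fin n, k ≤ (j : ℕ) → (M : Matrix (Fin n) (Fin n) ℂ) *ᵥ w j = w j := by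
    intro j hj
    rcases eq_or_ne j ⟨k, hk⟩ with rfl | hjk
    · simp [w, u, x, mulVec_smul, hfix]
    · simp only [w, Function.update_of_ne hjk]
      exact mem_blockSet_iff.mp hM j (hne j hjk hj)
  refine ⟨W, mem_blockSet_iff.mpr fun j hj => ?_⟩
  rw [UnitaryGroup.mul_val, UnitaryGroup.mul_val, UnitaryGroup.inv_val, ← mulVec_mulVec,
    ← mulVec_mulVec, hW j hj, hMw j hj, ← hW j hj, mulVec_mulVec, UnitaryGroup.star_mul_self,
    one_mulVec]

/-- The action `h ↦ g⁻¹ h g` of a subgroup `H` of the isotropy group at `gU(k)` on `ℂ^k`. -/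
def isotropyRep (g : unitaryGroup (Fin n) ℂ) (H : Subgroup (unitaryGroup (Fin n) ℂ))
    (hH : ∀ h ∈ H, g⁻¹ * h * g ∈ blockSet n k) : Representation ℂ H (blockSubspace n k) where
  toFun h := (toLin' (g⁻¹ * h * g : unitaryGroup (Fin n) ℂ)).restrict
    fun _ hv => mulVec_mem_blockSubspace (hH h h.2) hv
  map_one' := by ext; simp
  map_mul' h₁ h₂ := by
    ext v : 1
    simp only [Subgroup.coe_mul, show g⁻¹ * (h₁ * h₂ : unitaryGroup (Fin n) ℂ) * g =
      g⁻¹ * h₁ * g * (g⁻¹ * h₂ * g) by group]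
    exact Subtype.ext (mulVec_mulVec (v : Fin n → ℂ) _ _).symm

end Block

/-- Suppose `G ⊆ U(n)` is a finite group acting freely on `U(n)/U(n-f-1)`
(no nonidentity element is conjugate into `U(n-f-1)`).  Then every isotropy subgroup of
the `G`-action on `U(n)/U(n-f)` acts freely on the sphere `S^{2(n-f)-1}` (concretely: a
nonidentity element `h` of the isotropy group at `gU(n-f)` has `g⁻¹hg ∈ U(n-f)` fixing
no nonzero vector supported in the first `n-f` coordinates), and hence every abelian
subgroup of an isotropy subgroup is cyclic. -/
theorem isotropy_rank_one (n f : ℕ) (hf : f + 1 ≤ n)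
    (G : Subgroup (Matrix.unitaryGroup (Fin n) ℂ)) [Finite G]
    (hfree : ∀ h ∈ G, h ≠ 1 → ∀ u : Matrix.unitaryGroup (Fin n) ℂ,
      u⁻¹ * h * u ∉ blockSet n (n - f - 1)) :
    (∀ g : Matrix.unitaryGroup (Fin n) ℂ, ∀ h ∈ G, h ≠ 1 →
      g⁻¹ * h * g ∈ blockSet n (n - f) →
      ∀ v : Fin n → ℂ, (∀ i : Fin n, n - f ≤ (i : ℕ) → v i = 0) →
        Matrix.mulVec ((g⁻¹ * h * g : Matrix.unitaryGroup (Fin n) ℂ) :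
          Matrix (Fin n) (Fin n) ℂ) v = v → v = 0) ∧
    (∀ g : Matrix.unitaryGroup (Fin n) ℂ,
      ∀ H : Subgroup (Matrix.unitaryGroup (Fin n) ℂ), H ≤ G →
      (∀ h ∈ H, g⁻¹ * h * g ∈ blockSet n (n - f)) →
      (∀ a ∈ H, ∀ b ∈ H, a * b = b * a) → IsCyclic H) := by
  have hnf : n - f = n - f - 1 + 1 := by omega
  have hfixed : ∀ g : unitaryGroup (Fin n) ℂ, ∀ h ∈ G, h ≠ 1 →
      g⁻¹ * h * g ∈ blockSet n (n - f) → ∀ v ∈ blockSubspace n (n - f),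
        ((g⁻¹ * h * g : unitaryGroup (Fin n) ℂ) : Matrix (Fin n) (Fin n) ℂ) *ᵥ v = v → v = 0 := by
    intro g h hG hh hblock v hv hfix
    by_contra hv0
    rw [hnf] at hblock hv
    obtain ⟨W, hW⟩ := exists_conj_mem_blockSet_of_mulVec_eq_self (by omega) hblock hv hv0 hfix
    have hconj : (g * W)⁻¹ * h * (g * W) = W⁻¹ * (g⁻¹ * h * g) * W := by group
    exact hfree h hG hh (g * W) (hconj ▸ hW)
  refine ⟨hfixed, fun g H hHG hH hcomm => ?_⟩
  let : CommGroup H := { mul_comm := fun a b => Subtype.ext (hcomm a a.2 b b.2) }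
  have : Finite H := Finite.of_injective _ (Subgroup.inclusion_injective hHG)
  have : Nontrivial (blockSubspace n (n - f)) := nontrivial_blockSubspace (by omega) (by omega)
  refine (isotropyRep g H hH).isCyclic_of_fixedPointFree fun h hh v hv => Subtype.ext ?_
  exact hfixed g h (hHG h.2) (by simpa using hh) (hH h h.2) v v.2 (congrArg Subtype.val hv)
end

section
/- If a finite group G admits a faithful finite-dimensional complex representation V with fix_G(V) ≤ f, then the rank of G is at most f + 1; i.e., G contains no elementary abelian p-subgroup (ℤ/p)^{f+2} for any prime p. -/
/-!
Restrict the representation to an elementary abelian subgroup `A ≅ (ℤ/p)^(f+2)`. Over `ℂ` the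
commuting operators of `A` are simultaneously diagonalisable, so `V` is the direct sum of its
weight spaces, and each nonzero weight is a character `A → ℂˣ` with values in the `p`-th roots of
unity, whose kernel therefore has index at most `p`. Any `f + 1` kernels meet in a subgroup of
index at most `p^(f+1) < |A|`, hence in a nonidentity element `a`, which fixes the corresponding
`f + 1` independent weight spaces. If there are at most `f + 1` weights, `a` acts trivially,
contradicting faithfulness; otherwise its fixed space has dimension at least `f + 1`.
-/

open Module

theorem Module.End.isSemisimple_of_pow_eq_one {K V : Type*} [Field K] [AddCommGroup V]
    [Module K V] {T : End K V} {n : ℕ} (hn : (n : K) ≠ 0) (hT : T ^ n = 1) : T.IsSemisimple :=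
  isSemisimple_of_squarefree_aeval_eq_zero
    (Polynomial.separable_X_pow_sub_C (1 : K) hn one_ne_zero).squarefree
    (by rw [map_sub, map_pow, Polynomial.aeval_X, Polynomial.aeval_C, map_one, hT, sub_self])

theorem iSupIndep.card_le_finrank_iSup {K V ι : Type*} [Field K] [AddCommGroup V] [Module K V]
    [FiniteDimensional K V] {p : ι → Submodule K V} (hp : iSupIndep p)
    (s : Finset {i // p i ≠ ⊥}) : s.card ≤ finrank K ↥(⨆ i ∈ s, p i.1) := by
  have hv : ∀ i : s, ∃ v ∈ p i, v ≠ 0 := fun i => (Submodule.ne_bot_iff _).mp i.1.2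
  choose v hvp hv0 using hv
  have hli : LinearIndependent K v :=
    (hp.comp (Subtype.val_injective.comp Subtype.val_injective)).linearIndependent _ hvp hv0
  have hspan : Submodule.span K (Set.range v) ≤ ⨆ i ∈ s, p i.1 :=
    Submodule.span_le.mpr <| Set.range_subset_iff.mpr fun i =>
      (le_biSup (fun i : {i // p i ≠ ⊥} => p i.1) i.2) (hvp i)
  have := Submodule.finrank_mono hspan
  rwa [finrank_span_eq_card hli, Fintype.card_coe] at this

namespace MonoidHom

variable {G R : Type*} [Group G] [Finite G] [CommRing R] [IsDomain R]

theorem index_ker_le_exponent (ψ : G →* Rˣ) : ψ.ker.index ≤ Monoid.exponent G := by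
  have hrange : ψ.range ≤ rootsOfUnity (Monoid.exponent G) R := by
    rintro _ ⟨g, rfl⟩
    rw [mem_rootsOfUnity, ← map_pow, Monoid.pow_exponent_eq_one, map_one]
  rw [Subgroup.index_ker]
  exact (Subgroup.card_le_of_le hrange).trans (card_rootsOfUnity R _)

theorem exists_ne_one_forall_apply_eq_one {ι : Type*} [Fintype ι] (χ : ι → G →* R)
    (hcard : Monoid.exponent G ^ Fintype.card ι < Nat.card G) : ∃ g ≠ 1, ∀ i, χ i g = 1 := by
  set K := ⨅ i, (χ i).toHomUnits.ker
  have hK : K ≠ ⊥ := by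
    intro hK
    have : K.index ≤ Monoid.exponent G ^ Finset.univ.card :=
      (Subgroup.index_iInf_le _).trans
        (Finset.prod_le_pow_card _ _ _ fun i _ => index_ker_le_exponent (χ i).toHomUnits)
    rw [hK, Subgroup.index_bot, Finset.card_univ] at this
    exact this.not_gt hcard
  obtain ⟨⟨g, hgK⟩, hg1⟩ := Subgroup.ne_bot_iff_exists_ne_one.mp hK
  refine ⟨g, fun h => hg1 (Subtype.ext h), fun i => ?_⟩
  simpa [K, Units.ext_iff] using Subgroup.mem_iInf.mp hgK i

end MonoidHom

namespace Representation

section Group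

variable {k G V : Type*} [Field k] [Group G] [AddCommGroup V] [Module k V]
  (ρ : Representation k G V)

def weightSpace (χ : G → k) : Submodule k V := ⨅ g, End.eigenspace (ρ g) (χ g)

variable {ρ}

theorem mem_weightSpace {χ : G → k} {v : V} : v ∈ ρ.weightSpace χ ↔ ∀ g, ρ g v = χ g • v := by
  simp [weightSpace]

theorem weightSpace_le_eigenspace {χ : G → k} (g : G) :
    ρ.weightSpace χ ≤ End.eigenspace (ρ g) (χ g) :=
  iInf_le _ g

def weightCharacter {χ : G → k} (hχ : ρ.weightSpace χ ≠ ⊥) : G →* k where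
  toFun := χ
  map_one' := by
    obtain ⟨v, hv, hv0⟩ := (Submodule.ne_bot_iff _).mp hχ
    refine smul_left_injective k hv0 (?_ : _ • v = _ • v)
    simpa using (mem_weightSpace.mp hv 1).symm
  map_mul' g h := by
    obtain ⟨v, hv, hv0⟩ := (Submodule.ne_bot_iff _).mp hχ
    refine smul_left_injective k hv0 (?_ : _ • v = _ • v)
    have hρv := mem_weightSpace.mp hv
    rw [← hρv, map_mul, End.mul_apply, hρv h, map_smul, hρv g, smul_smul, mul_comm]

theorem maxGenEigenspace_eq_eigenspace [CharZero k] [Finite G] (g : G) (μ : k) :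
    End.maxGenEigenspace (ρ g) μ = End.eigenspace (ρ g) μ := by
  have hpow : ρ g ^ orderOf g = 1 := by rw [← map_pow, pow_orderOf_eq_one, map_one]
  exact (End.isSemisimple_of_pow_eq_one (by exact_mod_cast (orderOf_pos g).ne') hpow)
    |>.isFinitelySemisimple.maxGenEigenspace_eq_eigenspace μ

end Group

variable {k G V : Type*} [Field k] [CharZero k] [CommGroup G] [Finite G] [AddCommGroup V]
  [Module k V] {ρ : Representation k G V}

theorem iSupIndep_weightSpace : iSupIndep ρ.weightSpace := by
  have := End.independent_iInf_maxGenEigenspace_of_forall_mapsTo ρ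
    fun g h μ => End.mapsTo_maxGenEigenspace_of_comm ((Commute.all h g).map ρ) μ
  simp only [maxGenEigenspace_eq_eigenspace] at this
  exact this

theorem iSup_weightSpace_eq_top [IsAlgClosed k] [FiniteDimensional k V] :
    ⨆ χ, ρ.weightSpace χ = ⊤ := by
  have := End.iSup_iInf_maxGenEigenspace_eq_top_of_iSup_maxGenEigenspace_eq_top_of_commute
    ρ (fun g h _ => (Commute.all g h).map ρ) fun g => End.iSup_maxGenEigenspace_eq_top _
  simp only [maxGenEigenspace_eq_eigenspace] at this
  exact this

theorem exists_ne_one_lt_finrank_eigenspace_one [IsAlgClosed k] [FiniteDimensional k V]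
    (hρ : Function.Injective ρ) {f : ℕ} (hcard : Monoid.exponent G ^ (f + 1) < Nat.card G) :
    ∃ g ≠ 1, f < finrank k (End.eigenspace (ρ g) 1) := by
  have := (iSupIndep_weightSpace (ρ := ρ)).fintypeNeBotOfFiniteDimensional
  have hfixed : ∀ s : Finset {χ // ρ.weightSpace χ ≠ ⊥}, s.card ≤ f + 1 →
      ∃ g ≠ 1, ⨆ χ ∈ s, ρ.weightSpace χ.1 ≤ End.eigenspace (ρ g) 1 := by
    intro s hs
    obtain ⟨g, hg1, hg⟩ := MonoidHom.exists_ne_one_forall_apply_eq_one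
      (fun χ : s => weightCharacter χ.1.2)
      ((Nat.pow_le_pow_right (NeZero.pos _) (by simpa using hs)).trans_lt hcard)
    refine ⟨g, hg1, iSup₂_le fun χ hχ => ?_⟩
    have hχg : χ.1 g = 1 := hg ⟨χ, hχ⟩
    exact hχg ▸ weightSpace_le_eigenspace g
  by_cases hsmall : Fintype.card {χ // ρ.weightSpace χ ≠ ⊥} ≤ f + 1
  · obtain ⟨g, hg1, hg⟩ := hfixed Finset.univ hsmall
    have htop : End.eigenspace (ρ g) 1 = ⊤ := by
      rw [eq_top_iff, ← iSup_weightSpace_eq_top (ρ := ρ), ← iSup_ne_bot_subtype]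
      simpa using hg
    refine absurd (hρ (LinearMap.ext fun v => ?_)) hg1
    have hv : v ∈ End.eigenspace (ρ g) 1 := htop ▸ Submodule.mem_top
    simpa using End.mem_eigenspace_iff.mp hv
  · obtain ⟨s, -, hs⟩ := Finset.exists_subset_card_eq (s := Finset.univ) (n := f + 1)
      (by simpa using (not_le.mp hsmall).le)
    obtain ⟨g, hg1, hg⟩ := hfixed s hs.le
    refine ⟨g, hg1, ?_⟩
    calc f < s.card := by omega
      _ ≤ _ := iSupIndep_weightSpace.card_le_finrank_iSup s
      _ ≤ _ := Submodule.finrank_mono hg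

end Representation

theorem rank_le_fixity_add_one_general (G : Type*) [Group G]
    (V : Type*) [AddCommGroup V] [Module ℂ V] [FiniteDimensional ℂ V]
    (ρ : Representation ℂ G V) (hfaithful : Function.Injective ρ) (f : ℕ)
    (hfix : ∀ g : G, g ≠ 1 →
      Module.finrank ℂ (Module.End.eigenspace (ρ g) 1) ≤ f) :
    ∀ p : ℕ, p.Prime →
      ∀ φ : Multiplicative (Fin (f + 2) → ZMod p) →* G, ¬ Function.Injective φ := by
  intro p hp φ hφ
  have : Fact p.Prime := ⟨hp⟩
  have hexp : Monoid.exponent (Multiplicative (Fin (f + 2) → ZMod p)) ∣ p :=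
    Monoid.exponent_dvd_of_forall_pow_eq_one fun a => by
      rw [← toAdd_eq_zero, toAdd_pow]
      ext i
      simp
  have hcard : Monoid.exponent (Multiplicative (Fin (f + 2) → ZMod p)) ^ (f + 1) <
      Nat.card (Multiplicative (Fin (f + 2) → ZMod p)) :=
    calc _ ≤ p ^ (f + 1) := Nat.pow_le_pow_left (Nat.le_of_dvd hp.pos hexp) _
      _ < p ^ (f + 2) := Nat.pow_lt_pow_right hp.one_lt (by omega)
      _ = _ := by simp
  obtain ⟨a, ha1, ha⟩ := Representation.exists_ne_one_lt_finrank_eigenspace_one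
    (ρ := ρ.comp φ) (hfaithful.comp hφ) hcard
  exact (hfix (φ a) ((map_ne_one_iff φ hφ).mpr ha1)).not_gt ha

/-- If a finite group `G` admits a faithful finite-dimensional complex
representation `V` with `fix_G(V) ≤ f` (every nonidentity element fixes a subspace of
dimension at most `f`), then the rank of `G` is at most `f+1`: `G` contains no
elementary abelian `p`-subgroup `(ℤ/p)^{f+2}` for any prime `p`. -/
theorem rank_le_fixity_add_one (G : Type*) [Group G] [Finite G]
    (V : Type*) [AddCommGroup V] [Module ℂ V] [FiniteDimensional ℂ V]
    (ρ : Representation ℂ G V) (hfaithful : Function.Injective ρ) (f : ℕ)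
    (hfix : ∀ g : G, g ≠ 1 →
      Module.finrank ℂ (Module.End.eigenspace (ρ g) 1) ≤ f) :
    ∀ p : ℕ, p.Prime →
      ∀ φ : Multiplicative (Fin (f + 2) → ZMod p) →* G, ¬ Function.Injective φ :=
  rank_le_fixity_add_one_general G V ρ hfaithful f hfix
end

section
/- Let E = (ℤ/p)^r be an elementary abelian p-group acting faithfully on a finite-dimensional complex vector space V of dimension n. Then some nonidentity element g ∈ E satisfies dim_ℂ V^⟨g⟩ ≥ n·(p^{r-1} - 1)/(p^r - 1). -/
/-!
Write `A` additively, so that `E = Multiplicative A` with `A = (ℤ/p)^r`. Averaging over the line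
`ℤ/p · a` gives `p · dim V^a = ∑_c tr ρ(c • a)`. Summing over `a`, the terms with `c = 0`
contribute `|A| · dim V`, and for each `c ≠ 0` the map `a ↦ c • a` permutes `A`, so those terms
contribute `|A| · dim V^E ≥ 0`. Hence `∑_a dim V^a ≥ |A| · dim V / p`; the term `a = 0` is
`dim V`, and the largest of the remaining `|A| - 1` terms is at least their average.
-/

open Module Finset

theorem Finset.exists_sum_le_card_nsmul {ι M : Type*} [AddCommMonoid M] [LinearOrder M]
    [IsOrderedCancelAddMonoid M] {s : Finset ι} (hs : s.Nonempty) (f : ι → M) :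
    ∃ i ∈ s, ∑ j ∈ s, f j ≤ #s • f i :=
  exists_le_of_sum_le hs (by rw [sum_const, ← smul_sum])

namespace Representation

variable {k V : Type*} [Field k] [AddCommGroup V] [Module k V]

theorem invariants_comp_toSpanSingleton {n : ℕ} {A : Type*} [AddCommGroup A] [Module (ZMod n) A]
    (ρ : Representation k (Multiplicative A) V) (a : A) :
    invariants (ρ.comp (LinearMap.toSpanSingleton (ZMod n) A a).toAddMonoidHom.toMultiplicative)
      = End.eigenspace (ρ (.ofAdd a)) 1 := by
  have hgen (c : Multiplicative (ZMod n)) : c ∈ Subgroup.zpowers (.ofAdd 1) :=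
    Subgroup.mem_zpowers_iff.mpr ⟨(c.toAdd.cast : ℤ), by simp [← ofAdd_zsmul]⟩
  ext v
  rw [mem_invariants_iff_of_forall_mem_zpowers _ _ hgen, End.mem_eigenspace_iff, one_smul]
  simp

variable [FiniteDimensional k V] [CharZero k]

theorem card_mul_finrank_invariants {G : Type*} [Group G] [Fintype G]
    (ρ : Representation k G V) :
    (Fintype.card G : k) * finrank k ρ.invariants = ∑ g, LinearMap.trace k V (ρ g) := by
  have : Invertible (Fintype.card G : k) := invertibleOfNonzero (by simp)
  rw [← (isProj_averageMap ρ).trace]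
  simp [averageMap, asAlgebraHom, GroupAlgebra.average, map_sum, mul_sum]

variable {p : ℕ} {A : Type*} [AddCommGroup A] (ρ : Representation k (Multiplicative A) V)

theorem mul_finrank_eigenspace_eq_sum_trace [NeZero p] [Module (ZMod p) A] (a : A) :
    (p : k) * finrank k (End.eigenspace (ρ (.ofAdd a)) 1) =
      ∑ c : ZMod p, LinearMap.trace k V (ρ (.ofAdd (c • a))) := by
  have h := card_mul_finrank_invariants
    (ρ.comp (LinearMap.toSpanSingleton (ZMod p) A a).toAddMonoidHom.toMultiplicative)
  rw [Fintype.card_multiplicative, ZMod.card, invariants_comp_toSpanSingleton] at h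
  exact h.trans (Multiplicative.ofAdd.sum_comp _).symm

variable [Fintype A]

theorem sum_trace_ofAdd_eq_card_mul_finrank_invariants :
    ∑ a : A, LinearMap.trace k V (ρ (.ofAdd a)) = Fintype.card A * finrank k ρ.invariants := by
  rw [← Fintype.card_multiplicative, card_mul_finrank_invariants]
  exact Multiplicative.ofAdd.sum_comp fun g => LinearMap.trace k V (ρ g)

theorem mul_sum_finrank_eigenspace_eq [Fact p.Prime] [Module (ZMod p) A] :
    p * ∑ a : A, finrank k (End.eigenspace (ρ (.ofAdd a)) 1) =
      Fintype.card A * (finrank k V + (p - 1) * finrank k ρ.invariants) := by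
  have hsum_zero : ∑ a : A, LinearMap.trace k V (ρ (.ofAdd ((0 : ZMod p) • a))) =
      Fintype.card A * finrank k V := by
    simp
  have hsum_unit (c : ZMod p) (hc : c ≠ 0) : ∑ a : A, LinearMap.trace k V (ρ (.ofAdd (c • a))) =
      Fintype.card A * finrank k ρ.invariants := by
    rw [(smul_right_injective A hc).bijective_of_finite.sum_comp
      (fun a => LinearMap.trace k V (ρ (.ofAdd a))), sum_trace_ofAdd_eq_card_mul_finrank_invariants]
  apply Nat.cast_injective (R := k)
  push_cast [Nat.cast_sub (Fact.out : p.Prime).one_le, mul_sum, mul_finrank_eigenspace_eq_sum_trace]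
  rw [sum_comm, ← add_sum_erase _ _ (mem_univ 0), hsum_zero,
    sum_congr rfl fun c hc => hsum_unit c (ne_of_mem_erase hc), sum_const,
    card_erase_of_mem (mem_univ _), card_univ, ZMod.card, nsmul_eq_mul,
    Nat.cast_sub (Fact.out : p.Prime).one_le]
  ring

theorem card_sub_mul_finrank_le_mul_sum_finrank_eigenspace [DecidableEq A] [Fact p.Prime]
    [Module (ZMod p) A] :
    (Fintype.card A - p) * finrank k V ≤
      p * ∑ a ∈ univ.erase 0, finrank k (End.eigenspace (ρ (.ofAdd a)) 1) := by
  set S := ∑ a ∈ univ.erase 0, finrank k (End.eigenspace (ρ (.ofAdd a)) 1)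
  have h_one : End.eigenspace (ρ (.ofAdd 0)) 1 = ⊤ := by simp [End.eigenspace_def]
  have h := mul_sum_finrank_eigenspace_eq (p := p) ρ
  rw [← add_sum_erase _ _ (mem_univ 0), h_one, finrank_top] at h
  have hcard_le : Fintype.card A * finrank k V ≤ p * (finrank k V + S) :=
    calc Fintype.card A * finrank k V
        ≤ Fintype.card A * (finrank k V + (p - 1) * finrank k ρ.invariants) :=
          Nat.mul_le_mul_left _ (Nat.le_add_right _ _)
      _ = p * (finrank k V + S) := h.symm
  rw [Nat.sub_mul, Nat.sub_le_iff_le_add]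
  linarith

end Representation

theorem elementary_abelian_large_fixed_subspace_general (p r n : ℕ) (hp : p.Prime) (hr : 1 ≤ r)
    (V : Type*) [AddCommGroup V] [Module ℂ V] [FiniteDimensional ℂ V]
    (hn : Module.finrank ℂ V = n)
    (ρ : Representation ℂ (Multiplicative (Fin r → ZMod p)) V) :
    ∃ g : Multiplicative (Fin r → ZMod p), g ≠ 1 ∧
      n * (p ^ (r - 1) - 1) ≤
        Module.finrank ℂ (Module.End.eigenspace (ρ g) 1) * (p ^ r - 1) := by
  have : Fact p.Prime := ⟨hp⟩
  have : Nonempty (Fin r) := ⟨⟨0, hr⟩⟩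
  have hcard : Fintype.card (Fin r → ZMod p) = p ^ r := by simp
  have hsum : n * (p ^ (r - 1) - 1) ≤
      ∑ a ∈ univ.erase 0, finrank ℂ (End.eigenspace (ρ (.ofAdd a)) 1) := by
    have h := Representation.card_sub_mul_finrank_le_mul_sum_finrank_eigenspace (p := p) ρ
    have hpow : p ^ r - p = p * (p ^ (r - 1) - 1) := by
      rw [Nat.mul_sub_one, ← pow_succ', Nat.sub_add_cancel hr]
    rw [hcard, hn, hpow, mul_assoc, mul_comm _ n] at h
    exact Nat.le_of_mul_le_mul_left h hp.pos
  obtain ⟨a, ha, hle⟩ := exists_sum_le_card_nsmul univ_nontrivial.erase_nonempty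
    fun a => finrank ℂ (End.eigenspace (ρ (.ofAdd a)) 1)
  rw [card_erase_of_mem (mem_univ 0), card_univ, hcard, smul_eq_mul] at hle
  exact ⟨.ofAdd a, by simpa using ha, by linarith⟩

/-- Let `E = (ℤ/p)^r` (with `r ≥ 1`, `p` prime) act faithfully on a
finite-dimensional complex vector space `V` of dimension `n`.  Then some nonidentity
element `g ∈ E` satisfies `dim_ℂ V^⟨g⟩ ≥ n·(p^{r-1} - 1)/(p^r - 1)`, i.e.
`n·(p^{r-1} - 1) ≤ (dim_ℂ V^⟨g⟩)·(p^r - 1)`. -/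
theorem elementary_abelian_large_fixed_subspace (p r n : ℕ) (hp : p.Prime) (hr : 1 ≤ r)
    (V : Type*) [AddCommGroup V] [Module ℂ V] [FiniteDimensional ℂ V]
    (hn : Module.finrank ℂ V = n)
    (ρ : Representation ℂ (Multiplicative (Fin r → ZMod p)) V)
    (hfaithful : Function.Injective ρ) :
    ∃ g : Multiplicative (Fin r → ZMod p), g ≠ 1 ∧
      n * (p ^ (r - 1) - 1) ≤
        Module.finrank ℂ (Module.End.eigenspace (ρ g) 1) * (p ^ r - 1) :=
  elementary_abelian_large_fixed_subspace_general p r n hp hr V hn ρ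
end

section
/- Every metacyclic p-group P (an extension 1 → ℤ/p^t → P → ℤ/p^s → 1 with cyclic kernel and quotient) acts freely on a product of two spheres S^{2p^s - 1} × S^1, via a product of a linear action on S^{2p^s-1} and a linear action on S^1. -/
/-!
Let `χ` be a faithful character of the cyclic kernel `B` and let `ρ₁ = Ind_B^P χ`, realised by
monomial unitary matrices with respect to a set of coset representatives. Since `B` is normal,
an element `b ∈ B` acts diagonally with entries `χ (r⁻¹ b r)`, `r` running over the
representatives, and none of them is `1` when `b ≠ 1`; so `B` acts freely on the sphere of `ρ₁`.
A faithful character `ψ` of the cyclic quotient `P ⧸ B` moves every point of the circle under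
each `g ∉ B`. Hence every `g ≠ 1` acts freely on one of the two factors.
-/

open Matrix

lemma Matrix.eq_zero_of_diagonal_mulVec_eq_self {ι R : Type*} [Fintype ι] [DecidableEq ι]
    [Semiring R] [IsRightCancelMulZero R] {d v : ι → R} (hd : ∀ i, d i ≠ 1)
    (h : diagonal d *ᵥ v = v) : v = 0 := by
  funext i
  by_contra hv
  exact hd i ((mul_eq_right₀ hv).mp (by simpa [mulVec_diagonal] using congrFun h i))

section ExtendByZero

variable {P : Type*} [Group P] {B : Subgroup P} (χ : B →* Circle)

open scoped Classical in
noncomputable def extendByZero (x : P) : ℂ :=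
  if hx : x ∈ B then χ ⟨x, hx⟩ else 0

lemma extendByZero_of_mem {x : P} (hx : x ∈ B) : extendByZero χ x = χ ⟨x, hx⟩ := dif_pos hx

lemma extendByZero_of_notMem {x : P} (hx : x ∉ B) : extendByZero χ x = 0 := dif_neg hx

lemma extendByZero_one : extendByZero χ 1 = 1 := by
  rw [extendByZero_of_mem χ B.one_mem]
  exact congrArg Subtype.val (map_one χ)

lemma extendByZero_mul_of_mem_left {x y : P} (hx : x ∈ B) :
    extendByZero χ (x * y) = extendByZero χ x * extendByZero χ y := by
  by_cases hy : y ∈ B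
  · rw [extendByZero_of_mem χ (B.mul_mem hx hy), extendByZero_of_mem χ hx,
      extendByZero_of_mem χ hy, ← Circle.coe_mul, ← map_mul]
    rfl
  · rw [extendByZero_of_notMem χ hy, mul_zero,
      extendByZero_of_notMem χ ((B.mul_mem_cancel_left hx).not.mpr hy)]

lemma extendByZero_mul_of_mem_right {x y : P} (hy : y ∈ B) :
    extendByZero χ (x * y) = extendByZero χ x * extendByZero χ y := by
  by_cases hx : x ∈ B
  · exact extendByZero_mul_of_mem_left χ hx
  · rw [extendByZero_of_notMem χ hx, zero_mul,
      extendByZero_of_notMem χ ((B.mul_mem_cancel_right hy).not.mpr hx)]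

lemma star_extendByZero (x : P) : star (extendByZero χ x) = extendByZero χ x⁻¹ := by
  by_cases hx : x ∈ B
  · rw [extendByZero_of_mem χ hx, extendByZero_of_mem χ (B.inv_mem hx), Complex.star_def,
      ← Circle.coe_inv_eq_conj, ← map_inv]
    rfl
  · rw [extendByZero_of_notMem χ hx, extendByZero_of_notMem χ (B.inv_mem_iff.not.mpr hx),
      star_zero]

lemma extendByZero_ne_one (hχ : Function.Injective χ) {x : P} (hx : x ∈ B) (hx1 : x ≠ 1) :
    extendByZero χ x ≠ 1 := by
  rw [extendByZero_of_mem χ hx, Ne, ← Circle.coe_one, Circle.coe_inj, ← map_one χ, hχ.eq_iff]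
  exact fun h => hx1 (congrArg Subtype.val h)

end ExtendByZero


section Induced

variable {P : Type*} [Group P] {B : Subgroup P} {ι : Type*} (e : P ⧸ B ≃ ι) (χ : B →* Circle)

lemma out_symm_inv_mul_mem_iff (i : ι) (x : P) : (e.symm i).out⁻¹ * x ∈ B ↔ e x = i := by
  rw [← QuotientGroup.eq, QuotientGroup.out_eq', Equiv.symm_apply_eq, eq_comm]

/-- The matrix of `Ind_B^P χ` in the basis indexed by the coset representatives
`(e.symm i).out`. -/
noncomputable def inducedMatrix (g : P) : Matrix ι ι ℂ :=
  Matrix.of fun i j => extendByZero χ ((e.symm i).out⁻¹ * g * (e.symm j).out)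

lemma inducedMatrix_apply (g : P) (i j : ι) :
    inducedMatrix e χ g i j = extendByZero χ ((e.symm i).out⁻¹ * g * (e.symm j).out) := rfl

lemma inducedMatrix_one [DecidableEq ι] : inducedMatrix e χ 1 = 1 := by
  ext i j
  rw [inducedMatrix_apply, mul_one, one_apply]
  split_ifs with hij
  · rw [hij, inv_mul_cancel, extendByZero_one]
  · refine extendByZero_of_notMem χ ?_
    rw [out_symm_inv_mul_mem_iff, QuotientGroup.out_eq', Equiv.apply_symm_apply]
    exact Ne.symm hij

lemma inducedMatrix_mul [Fintype ι] (g h : P) :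
    inducedMatrix e χ (g * h) = inducedMatrix e χ g * inducedMatrix e χ h := by
  ext i k
  rw [mul_apply, Finset.sum_eq_single (e (h * (e.symm k).out)) _ (by simp)]
  · set j := e (h * (e.symm k).out)
    have hj : (e.symm j).out⁻¹ * h * (e.symm k).out ∈ B := by
      rw [mul_assoc, out_symm_inv_mul_mem_iff]
    rw [inducedMatrix_apply, inducedMatrix_apply, inducedMatrix_apply,
      ← extendByZero_mul_of_mem_right χ hj]
    congr 1
    group
  · intro j _ hj
    rw [inducedMatrix_apply e χ h, extendByZero_of_notMem χ, mul_zero]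
    rw [mul_assoc, out_symm_inv_mul_mem_iff]
    exact Ne.symm hj

lemma star_inducedMatrix (g : P) : star (inducedMatrix e χ g) = inducedMatrix e χ g⁻¹ := by
  ext i j
  rw [star_apply, inducedMatrix_apply, inducedMatrix_apply, star_extendByZero]
  congr 1
  group

lemma inducedMatrix_mem_unitaryGroup [Fintype ι] [DecidableEq ι] (g : P) :
    inducedMatrix e χ g ∈ unitaryGroup ι ℂ := by
  rw [mem_unitaryGroup_iff, star_inducedMatrix, ← inducedMatrix_mul, mul_inv_cancel,
    inducedMatrix_one]

noncomputable def inducedUnitaryRep [Fintype ι] [DecidableEq ι] : P →* unitaryGroup ι ℂ where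
  toFun g := ⟨inducedMatrix e χ g, inducedMatrix_mem_unitaryGroup e χ g⟩
  map_one' := Subtype.ext (inducedMatrix_one e χ)
  map_mul' g h := Subtype.ext (inducedMatrix_mul e χ g h)

lemma inducedMatrix_of_mem [B.Normal] [DecidableEq ι] {b : P} (hb : b ∈ B) :
    inducedMatrix e χ b =
      diagonal fun i => extendByZero χ ((e.symm i).out⁻¹ * b * (e.symm i).out) := by
  ext i j
  have hconj : (e.symm i).out⁻¹ * b * (e.symm i).out ∈ B := by
    simpa using ‹B.Normal›.conj_mem b hb (e.symm i).out⁻¹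
  calc inducedMatrix e χ b i j
      = extendByZero χ ((e.symm i).out⁻¹ * b * (e.symm i).out *
          ((e.symm i).out⁻¹ * 1 * (e.symm j).out)) := by
        rw [inducedMatrix_apply]; congr 1; group
    _ = extendByZero χ ((e.symm i).out⁻¹ * b * (e.symm i).out) * (1 : Matrix ι ι ℂ) i j := by
        rw [extendByZero_mul_of_mem_left χ hconj, ← inducedMatrix_one e χ, inducedMatrix_apply]
    _ = _ := by rw [one_apply, diagonal_apply]; split_ifs <;> simp

end Induced

lemma eq_zero_of_inducedMatrix_mulVec_eq_self {P : Type*} [Group P] {B : Subgroup P} [B.Normal]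
    {ι : Type*} [Fintype ι] [DecidableEq ι] (e : P ⧸ B ≃ ι) {χ : B →* Circle}
    (hχ : Function.Injective χ) {b : P} (hb : b ∈ B) (hb1 : b ≠ 1) {v : ι → ℂ}
    (h : inducedMatrix e χ b *ᵥ v = v) : v = 0 := by
  rw [inducedMatrix_of_mem e χ hb] at h
  refine eq_zero_of_diagonal_mulVec_eq_self (fun i => extendByZero_ne_one χ hχ ?_ ?_) h
  · simpa using ‹B.Normal›.conj_mem b hb (e.symm i).out⁻¹
  · simpa [mul_assoc, inv_mul_eq_one, mul_eq_left] using hb1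

noncomputable def circleScalar (ι : Type*) [Fintype ι] [DecidableEq ι] :
    Circle →* unitaryGroup ι ℂ where
  toFun z := ⟨diagonal fun _ => (z : ℂ), by
    rw [mem_unitaryGroup_iff, star_eq_conjTranspose, diagonal_conjTranspose,
      diagonal_mul_diagonal, ← diagonal_one]
    simp [← Circle.coe_inv_eq_conj]⟩
  map_one' := Subtype.ext (by simp)
  map_mul' z w := Subtype.ext (by simp [diagonal_mul_diagonal])

theorem metacyclic_free_action_product_spheres_general (p t s : ℕ) (hp : p.Prime)
    (P : Type*) [Group P] (B : Subgroup P) [B.Normal]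
    (hB : Nonempty (B ≃* Multiplicative (ZMod (p ^ t))))
    (hQ : Nonempty ((P ⧸ B) ≃* Multiplicative (ZMod (p ^ s)))) :
    ∃ (ρ₁ : P →* Matrix.unitaryGroup (Fin (p ^ s)) ℂ)
      (ρ₂ : P →* Matrix.unitaryGroup (Fin 1) ℂ),
      ∀ g : P, g ≠ 1 → ∀ (v : Fin (p ^ s) → ℂ) (w : ℂ),
        ‖(EuclideanSpace.equiv (Fin (p ^ s)) ℂ).symm v‖ = 1 → ‖w‖ = 1 →
        ¬ (Matrix.mulVec ((ρ₁ g : Matrix.unitaryGroup (Fin (p ^ s)) ℂ) :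
              Matrix (Fin (p ^ s)) (Fin (p ^ s)) ℂ) v = v ∧
           ((ρ₂ g : Matrix.unitaryGroup (Fin 1) ℂ) : Matrix (Fin 1) (Fin 1) ℂ) 0 0 * w = w) := by
  obtain ⟨eB⟩ := hB
  obtain ⟨eQ⟩ := hQ
  have : NeZero p := ⟨hp.ne_zero⟩
  let χ : B →* Circle := ZMod.toCircle.toMonoidHom.comp eB.toMonoidHom
  have hχ : Function.Injective χ := ZMod.injective_toCircle.comp eB.injective
  let ψ : P ⧸ B →* Circle := ZMod.toCircle.toMonoidHom.comp eQ.toMonoidHom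
  have hψ : Function.Injective ψ := ZMod.injective_toCircle.comp eQ.injective
  let e : P ⧸ B ≃ Fin (p ^ s) := eQ.toEquiv.trans (ZMod.finEquiv _).symm.toEquiv
  refine ⟨inducedUnitaryRep e χ, (circleScalar (Fin 1)).comp (ψ.comp (QuotientGroup.mk' B)),
    fun g hg v w hv hw ⟨hgv, hgw⟩ => ?_⟩
  by_cases hgB : g ∈ B
  · obtain rfl := eq_zero_of_inducedMatrix_mulVec_eq_self e hχ hgB hg hgv
    simp at hv
  · have hw0 : w ≠ 0 := norm_ne_zero_iff.mp (hw ▸ one_ne_zero)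
    have hψg : ψ g = 1 := by
      rw [← Circle.coe_inj, Circle.coe_one, ← mul_eq_right₀ hw0]
      simpa [circleScalar] using hgw
    exact hgB ((QuotientGroup.eq_one_iff g).mp (hψ (hψg.trans (map_one ψ).symm)))

/-- Every metacyclic `p`-group `P` (an extension
`1 → ℤ/p^t → P → ℤ/p^s → 1` with cyclic kernel and quotient) acts freely on the
product of two spheres `S^{2p^s-1} × S^1`, via a product of linear (unitary) actions:
a `p^s`-dimensional unitary representation on the unit sphere of `ℂ^{p^s}` together
with a one-dimensional unitary representation on the unit circle in `ℂ`. -/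
theorem metacyclic_free_action_product_spheres (p t s : ℕ) (hp : p.Prime)
    (P : Type*) [Group P] [Finite P] (B : Subgroup P) [B.Normal]
    (hB : Nonempty (B ≃* Multiplicative (ZMod (p ^ t))))
    (hQ : Nonempty ((P ⧸ B) ≃* Multiplicative (ZMod (p ^ s)))) :
    ∃ (ρ₁ : P →* Matrix.unitaryGroup (Fin (p ^ s)) ℂ)
      (ρ₂ : P →* Matrix.unitaryGroup (Fin 1) ℂ),
      ∀ g : P, g ≠ 1 → ∀ (v : Fin (p ^ s) → ℂ) (w : ℂ),
        ‖(EuclideanSpace.equiv (Fin (p ^ s)) ℂ).symm v‖ = 1 → ‖w‖ = 1 →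
        ¬ (Matrix.mulVec ((ρ₁ g : Matrix.unitaryGroup (Fin (p ^ s)) ℂ) :
              Matrix (Fin (p ^ s)) (Fin (p ^ s)) ℂ) v = v ∧
           ((ρ₂ g : Matrix.unitaryGroup (Fin 1) ℂ) : Matrix (Fin 1) (Fin 1) ℂ) 0 0 * w = w) :=
  metacyclic_free_action_product_spheres_general p t s hp P B hB hQ
end

section
/- For r coprime to the order q of a finite group G, the ℤG-module P_r = ker(ℤG → ℤ/r) (augmentation followed by reduction mod r) is projective. -/
variable (G : Type*) [Group G]

/-- The augmentation `ℤG → ℤ`. -/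
noncomputable def aug : MonoidAlgebra ℤ G →ₐ[ℤ] ℤ :=
  MonoidAlgebra.lift ℤ ℤ G 1

/-- The `ℤG`-submodule `P_r = ker(ℤG → ℤ/r)` of the group ring, the kernel of the
augmentation followed by reduction mod `r`; concretely the elements whose augmentation
is divisible by `r`. -/
noncomputable def swanModule (r : ℤ) :
    Submodule (MonoidAlgebra ℤ G) (MonoidAlgebra ℤ G) where
  carrier := {x | r ∣ aug G x}
  add_mem' := by
    intro a b ha hb
    simpa [map_add] using dvd_add ha hb
  zero_mem' := by simp
  smul_mem' := by
    intro c x hx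
    simpa [smul_eq_mul, map_mul] using Dvd.dvd.mul_left hx (aug G c)

/-!
With `N = ∑ g` the norm element and `q = |G|`, one has `x N = ε(x) N`, so `r` and `q - N` lie in
`P_r`. If `u r + v q = 1`, then `x ↦ (u x + v (ε(x) / r) N, v x)` is a `ℤG`-linear section of
`(a, b) ↦ a r + b (q - N) : ℤG² → P_r`, because
`(u x + v (ε(x) / r) N) r + v x (q - N) = (u r + v q) x + v ε(x) N - v ε(x) N = x`.
Hence `P_r` is a direct summand of `ℤG²`.
-/

open MonoidAlgebra

section NormElement

variable (k : Type*) [CommSemiring k] [Fintype G]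

noncomputable def normElement : MonoidAlgebra k G := ∑ g : G, of k G g

lemma lift_one_normElement : lift k k G 1 (normElement G k) = Fintype.card G := by
  simp [normElement]

lemma mul_normElement (x : MonoidAlgebra k G) :
    x * normElement G k = lift k k G 1 x • normElement G k := by
  induction x using MonoidAlgebra.induction_on with
  | of g =>
    rw [lift_of, MonoidHom.one_apply, one_smul, normElement, Finset.mul_sum]
    simp_rw [← map_mul]
    exact Fintype.sum_equiv (Equiv.mulLeft g) _ _ fun _ => rfl
  | add x y hx hy => rw [add_mul, hx, hy, map_add, add_smul]
  | smul c x hx => rw [smul_mul_assoc, hx, map_smul, smul_eq_mul, mul_smul]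

end NormElement

lemma mul_normElement_eq_aug_smul [Fintype G] (x : MonoidAlgebra ℤ G) :
    x * normElement G ℤ = aug G x • normElement G ℤ :=
  mul_normElement G ℤ x

namespace swanModule

variable (r : ℤ)

lemma mem_iff {x : MonoidAlgebra ℤ G} : x ∈ swanModule G r ↔ r ∣ aug G x := Iff.rfl

lemma smul_one_mem : r • (1 : MonoidAlgebra ℤ G) ∈ swanModule G r := by
  simp [mem_iff]

lemma card_smul_one_sub_normElement_mem [Fintype G] :
    (Fintype.card G : ℤ) • (1 : MonoidAlgebra ℤ G) - normElement G ℤ ∈ swanModule G r := by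
  simp [mem_iff, aug, lift_one_normElement]

variable [Fintype G]

noncomputable def augDivSMulNormElement :
    swanModule G r →ₗ[MonoidAlgebra ℤ G] MonoidAlgebra ℤ G where
  toFun x := (aug G x / r) • normElement G ℤ
  map_add' x y := by
    rw [Submodule.coe_add, map_add, Int.add_ediv_of_dvd_left x.2, add_smul]
  map_smul' c x := by
    rw [Submodule.coe_smul, smul_eq_mul, map_mul, Int.mul_ediv_assoc _ x.2, mul_smul,
      RingHom.id_apply, smul_eq_mul c, mul_smul_comm, mul_normElement_eq_aug_smul, smul_comm]

noncomputable def cover :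
    MonoidAlgebra ℤ G × MonoidAlgebra ℤ G →ₗ[MonoidAlgebra ℤ G] swanModule G r :=
  (LinearMap.toSpanSingleton _ _ ⟨_, smul_one_mem G r⟩).coprod
    (LinearMap.toSpanSingleton _ _ ⟨_, card_smul_one_sub_normElement_mem G r⟩)

noncomputable def coverSection (u v : ℤ) :
    swanModule G r →ₗ[MonoidAlgebra ℤ G] MonoidAlgebra ℤ G × MonoidAlgebra ℤ G :=
  (u • (swanModule G r).subtype + v • augDivSMulNormElement G r).prod
    (v • (swanModule G r).subtype)

lemma coe_cover_apply (p : MonoidAlgebra ℤ G × MonoidAlgebra ℤ G) :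
    (cover G r p : MonoidAlgebra ℤ G)
      = p.1 * (r • 1) + p.2 * ((Fintype.card G : ℤ) • 1 - normElement G ℤ) :=
  rfl

lemma coverSection_apply (u v : ℤ) (x : swanModule G r) :
    coverSection G r u v x
      = (u • (x : MonoidAlgebra ℤ G) + v • (aug G x / r) • normElement G ℤ,
          v • (x : MonoidAlgebra ℤ G)) :=
  rfl

lemma cover_comp_coverSection {u v : ℤ} (huv : u * r + v * Fintype.card G = 1) :
    cover G r ∘ₗ coverSection G r u v = LinearMap.id := by
  refine LinearMap.ext fun x => Subtype.ext ?_
  have hx : r * (aug G x / r) = aug G x := Int.mul_ediv_cancel' x.2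
  rw [LinearMap.comp_apply, coverSection_apply, coe_cover_apply, LinearMap.id_apply, mul_sub,
    smul_mul_assoc v, mul_normElement_eq_aug_smul, map_smul]
  simp only [mul_smul_comm, mul_one]
  match_scalars
  · linear_combination huv
  · linear_combination v * hx

end swanModule

/-- For `r` coprime to the order `q` of a finite group `G`, the
`ℤG`-module `P_r = ker(ℤG → ℤ/r)` is projective. -/
theorem swanModule_projective (G : Type*) [Group G] [Finite G] (r : ℤ)
    (hr : IsCoprime r (Nat.card G : ℤ)) :
    Module.Projective (MonoidAlgebra ℤ G) (swanModule G r) := by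
  have := Fintype.ofFinite G
  obtain ⟨u, v, huv⟩ := hr
  rw [Nat.card_eq_fintype_card] at huv
  exact .of_split _ _ (swanModule.cover_comp_coverSection G r huv)
end

section
/- The torsion Euler characteristic is multiplicative under composition: if f : X → Y and g : Y → Z are maps of spaces (or chain maps of chain complexes) which are rational homology equivalences with finite homology of the mapping cones, then χ^tor(g ∘ f) = χ^tor(g) · χ^tor(f), where χ^tor(f) = ∏_i |H_i(C_f)|^{(-1)^i} and C_f is the mapping cone of f. -/
/-!
The cone of `g ∘ f` sits in a distinguished triangle `C_f → C_{g∘f} → C_g → C_f[1]` of the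
homotopy category, hence in a long exact homology sequence. Exactness splits the order of each
term as the product of the orders of the images of the incoming and outgoing maps. In the
alternating product the images of `H(C_f) → H(C_{g∘f})` and `H(C_{g∘f}) → H(C_g)` cancel
degreewise, while the images of the connecting maps telescope down to the two ends of the range,
where they are trivial because the homology of `C_f` and `C_g` vanishes there.
-/

open CategoryTheory

/-- `altProd N a = ∏_{|i| ≤ N} a i ^ (-1)^i`; for `a i = |H_i(C_f)|` this is `χ^tor(f)`. -/
noncomputable def altProd (N : ℕ) (a : ℤ → ℕ) : ℚ :=
  ∏ i ∈ Finset.Icc (-(N : ℤ)) N, if Even i then (a i : ℚ) else (a i : ℚ)⁻¹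

theorem Int.prod_Ioc_div_sub_one {G₀ : Type*} [CommGroupWithZero G₀] {u : ℤ → G₀}
    (hu : ∀ i, u i ≠ 0) {a b : ℤ} (hab : a ≤ b) :
    ∏ i ∈ Finset.Ioc a b, u i / u (i - 1) = u b / u a := by
  induction b, hab using Int.leInduction with
  | base => simp [div_self (hu a)]
  | succ b hab ih =>
    rw [← Finset.insert_Ioc_right_eq_Ioc_add_one hab, Finset.prod_insert (by simp), ih,
      add_sub_cancel_right, div_mul_div_cancel₀ (hu b)]

namespace altProd

theorem mul (N : ℕ) (a b : ℤ → ℕ) :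
    altProd N (fun i => a i * b i) = altProd N a * altProd N b := by
  rw [altProd, altProd, altProd, ← Finset.prod_mul_distrib]
  refine Finset.prod_congr rfl fun i _ => ?_
  split_ifs <;> push_cast <;> simp only [mul_inv]

theorem mul_shift_eq_one {N : ℕ} {k : ℤ → ℕ} (hk : ∀ i, k i ≠ 0) (hkN : k N = 1)
    (hk_neg : k (-(N : ℤ) - 1) = 1) :
    altProd N (fun i => k i * k (i - 1)) = 1 := by
  set u : ℤ → ℚ := fun i => if Even i then (k i : ℚ) else (k i : ℚ)⁻¹
  have hu : ∀ i, u i ≠ 0 := fun i => by simp only [u]; split_ifs <;> simp [hk i]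
  have hterm : ∀ i : ℤ, (if Even i then ((k i * k (i - 1) : ℕ) : ℚ)
      else ((k i * k (i - 1) : ℕ) : ℚ)⁻¹) = u i / u (i - 1) := fun i => by
    simp only [u, Int.even_sub_one]
    split_ifs <;> push_cast <;> simp only [div_eq_mul_inv, mul_inv, inv_inv]
  have hIcc : Finset.Icc (-(N : ℤ)) N = Finset.Ioc (-(N : ℤ) - 1) N := by
    ext; simp only [Finset.mem_Icc, Finset.mem_Ioc]; omega
  rw [altProd, hIcc, Finset.prod_congr rfl fun i _ => hterm i,
    Int.prod_Ioc_div_sub_one hu (by omega)]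
  simp [u, hkN, hk_neg]

theorem of_exact {N : ℕ} {a b c r₁ r₂ k : ℤ → ℕ} (hb : ∀ i, b i = r₁ i * r₂ i)
    (hc : ∀ i, c i = r₂ i * k i) (ha : ∀ i, a i = k (i - 1) * r₁ i) (hk : ∀ i, k i ≠ 0)
    (hkN : k N = 1) (hk_neg : k (-(N : ℤ) - 1) = 1) :
    altProd N b = altProd N c * altProd N a := by
  have hcancel := mul N k (fun i => k (i - 1))
  rw [mul_shift_eq_one hk hkN hk_neg] at hcancel
  rw [funext hb, funext hc, funext ha, mul, mul, mul]
  linear_combination (altProd N r₁ * altProd N r₂) * hcancel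

end altProd

/-- No finiteness is needed: `Nat.card` is `0` on infinite types, and `S.X₂` is infinite exactly
when one of the two ranges is. -/
theorem CategoryTheory.ShortComplex.Exact.card_X₂_eq_card_range_mul_card_range {R : Type*}
    [Ring R] {S : ShortComplex (ModuleCat R)} (hS : S.Exact) :
    Nat.card S.X₂ = Nat.card (LinearMap.range S.f.hom) * Nat.card (LinearMap.range S.g.hom) := by
  rw [(LinearMap.range S.f.hom).card_eq_card_quotient_mul_card, hS.moduleCat_range_eq_ker,
    Nat.card_congr S.g.hom.quotKerEquivRange.toEquiv]

section

variable {R M M₂ : Type*} [Ring R] [AddCommGroup M] [AddCommGroup M₂] [Module R M] [Module R M₂]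

theorem LinearMap.card_range_eq_one_of_card_domain_eq_one (f : M →ₗ[R] M₂) (h : Nat.card M = 1) :
    Nat.card (LinearMap.range f) = 1 := by
  have : Subsingleton M := (Nat.card_eq_one_iff_unique.1 h).1
  rw [Subsingleton.elim f 0, LinearMap.range_zero]
  exact Nat.card_unique

theorem LinearMap.card_range_eq_one_of_card_codomain_eq_one (f : M →ₗ[R] M₂)
    (h : Nat.card M₂ = 1) : Nat.card (LinearMap.range f) = 1 := by
  have : Subsingleton M₂ := (Nat.card_eq_one_iff_unique.1 h).1
  exact Nat.card_unique

end

namespace CategoryTheory.Functor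

open Limits Pretriangulated

variable {C : Type*} [Category C] [HasZeroObject C] [HasShift C ℤ] [Preadditive C]
  [∀ n : ℤ, (shiftFunctor C n).Additive] [Pretriangulated C] {R : Type*} [Ring R]
  (F : C ⥤ ModuleCat R) [F.IsHomological] [F.ShiftSequence ℤ]

theorem altProd_card_shift_obj₂_eq {T : Triangle C} (hT : T ∈ distTriang C) (N : ℕ)
    (h₁ : ∀ n : ℤ, Finite ((F.shift n).obj T.obj₁))
    (hN₁ : Nat.card ((F.shift ((N : ℤ) + 1)).obj T.obj₁) = 1)
    (hN₃ : Nat.card ((F.shift (-(N : ℤ) - 1)).obj T.obj₃) = 1) :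
    altProd N (fun n => Nat.card ((F.shift n).obj T.obj₂)) =
      altProd N (fun n => Nat.card ((F.shift n).obj T.obj₃)) *
        altProd N (fun n => Nat.card ((F.shift n).obj T.obj₁)) := by
  set r₁ : ℤ → ℕ := fun n => Nat.card (LinearMap.range ((F.shift n).map T.mor₁).hom)
  set r₂ : ℤ → ℕ := fun n => Nat.card (LinearMap.range ((F.shift n).map T.mor₂).hom)
  set k : ℤ → ℕ := fun n => Nat.card (LinearMap.range (F.homologySequenceδ T n (n + 1) rfl).hom)
  have hδ : ∀ n : ℤ, Nat.card ((F.shift (n + 1)).obj T.obj₁) = k n * r₁ (n + 1) := fun n =>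
    (F.homologySequence_exact₁ T hT n (n + 1) rfl).card_X₂_eq_card_range_mul_card_range
  refine altProd.of_exact (r₁ := r₁) (r₂ := r₂) (k := k)
    (fun n => (F.homologySequence_exact₂ T hT n).card_X₂_eq_card_range_mul_card_range)
    (fun n => (F.homologySequence_exact₃ T hT n (n + 1) rfl).card_X₂_eq_card_range_mul_card_range)
    (fun n => by simpa only [sub_add_cancel] using hδ (n - 1))
    -- `k n` is the order of a submodule of the finite module `(F.shift (n + 1)).obj T.obj₁`
    (fun n => Nat.card_pos.ne') ?_ ?_
  · exact LinearMap.card_range_eq_one_of_card_codomain_eq_one _ hN₁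
  · exact LinearMap.card_range_eq_one_of_card_domain_eq_one _ hN₃

end CategoryTheory.Functor

namespace HomotopyCategory

open Pretriangulated

variable {R : Type*} [Ring R]

noncomputable def homologyFunctorShiftObjEquiv (K : CochainComplex (ModuleCat R) ℤ) (n : ℤ) :
    ((homologyFunctor (ModuleCat R) (ComplexShape.up ℤ) 0).shift n).obj ((quotient _ _).obj K) ≃
      K.homology n :=
  ((forget _).mapIso ((homologyFunctorFactors _ _ n).app K)).toEquiv

theorem altProd_card_homology_obj₂_eq {T : Triangle (CochainComplex (ModuleCat R) ℤ)}
    (hT : (quotient _ _).mapTriangle.obj T ∈ distTriang _) (N : ℕ)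
    (h₁ : ∀ n : ℤ, Finite (T.obj₁.homology n))
    (hN₁ : Nat.card (T.obj₁.homology ((N : ℤ) + 1)) = 1)
    (hN₃ : Nat.card (T.obj₃.homology (-(N : ℤ) - 1)) = 1) :
    altProd N (fun n => Nat.card (T.obj₂.homology n)) =
      altProd N (fun n => Nat.card (T.obj₃.homology n)) *
        altProd N (fun n => Nat.card (T.obj₁.homology n)) := by
  have hcard := fun K n => Nat.card_congr (homologyFunctorShiftObjEquiv (R := R) K n)
  have key := (homologyFunctor (ModuleCat R) (ComplexShape.up ℤ) 0).altProd_card_shift_obj₂_eq hT N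
    (fun n => .of_equiv _ (homologyFunctorShiftObjEquiv _ n).symm)
    ((hcard _ _).trans hN₁) ((hcard _ _).trans hN₃)
  simpa only [Functor.mapTriangle_obj, Triangle.mk_obj₁, Triangle.mk_obj₂, Triangle.mk_obj₃, hcard]
    using key

end HomotopyCategory

theorem chi_tor_multiplicative_general
    {X Y Z : CochainComplex (ModuleCat ℤ) ℤ} (f : X ⟶ Y) (g : Y ⟶ Z)
    (hf : ∀ i : ℤ, Finite ((CochainComplex.mappingCone f).homology i))
    (N : ℕ)
    (hfN : ∀ i : ℤ, N < i.natAbs → Nat.card ((CochainComplex.mappingCone f).homology i) = 1)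
    (hgN : ∀ i : ℤ, N < i.natAbs → Nat.card ((CochainComplex.mappingCone g).homology i) = 1) :
    (∏ i ∈ Finset.Icc (-(N : ℤ)) N,
        (if Even i then (Nat.card ((CochainComplex.mappingCone (f ≫ g)).homology i) : ℚ)
          else (Nat.card ((CochainComplex.mappingCone (f ≫ g)).homology i) : ℚ)⁻¹)) =
    (∏ i ∈ Finset.Icc (-(N : ℤ)) N,
        (if Even i then (Nat.card ((CochainComplex.mappingCone g).homology i) : ℚ)
          else (Nat.card ((CochainComplex.mappingCone g).homology i) : ℚ)⁻¹)) *
    (∏ i ∈ Finset.Icc (-(N : ℤ)) N,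
        (if Even i then (Nat.card ((CochainComplex.mappingCone f).homology i) : ℚ)
          else (Nat.card ((CochainComplex.mappingCone f).homology i) : ℚ)⁻¹)) :=
  HomotopyCategory.altProd_card_homology_obj₂_eq (T := CochainComplex.mappingConeCompTriangle f g)
    (HomotopyCategory.mappingConeCompTriangleh_distinguished f g) N hf
    (hfN _ (by omega)) (hgN _ (by omega))

/-- the torsion Euler characteristic
`χ^tor(f) = ∏ᵢ |H_i(C_f)|^{(-1)^i}` is multiplicative under composition: for chain maps
`f : X ⟶ Y`, `g : Y ⟶ Z` of (co)chain complexes which are rational homology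
equivalences — i.e. the homology of each mapping cone is finite in every degree and
trivial outside a finite range — one has `χ^tor(g ∘ f) = χ^tor(g) · χ^tor(f)`. -/
theorem chi_tor_multiplicative
    {X Y Z : CochainComplex (ModuleCat ℤ) ℤ} (f : X ⟶ Y) (g : Y ⟶ Z)
    (hf : ∀ i : ℤ, Finite ((CochainComplex.mappingCone f).homology i))
    (hg : ∀ i : ℤ, Finite ((CochainComplex.mappingCone g).homology i))
    (hgf : ∀ i : ℤ, Finite ((CochainComplex.mappingCone (f ≫ g)).homology i))
    (N : ℕ)
    (hfN : ∀ i : ℤ, N < i.natAbs → Nat.card ((CochainComplex.mappingCone f).homology i) = 1)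
    (hgN : ∀ i : ℤ, N < i.natAbs → Nat.card ((CochainComplex.mappingCone g).homology i) = 1)
    (hgfN : ∀ i : ℤ, N < i.natAbs →
      Nat.card ((CochainComplex.mappingCone (f ≫ g)).homology i) = 1) :
    (∏ i ∈ Finset.Icc (-(N : ℤ)) N,
        (if Even i then (Nat.card ((CochainComplex.mappingCone (f ≫ g)).homology i) : ℚ)
          else (Nat.card ((CochainComplex.mappingCone (f ≫ g)).homology i) : ℚ)⁻¹)) =
    (∏ i ∈ Finset.Icc (-(N : ℤ)) N,
        (if Even i then (Nat.card ((CochainComplex.mappingCone g).homology i) : ℚ)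
          else (Nat.card ((CochainComplex.mappingCone g).homology i) : ℚ)⁻¹)) *
    (∏ i ∈ Finset.Icc (-(N : ℤ)) N,
        (if Even i then (Nat.card ((CochainComplex.mappingCone f).homology i) : ℚ)
          else (Nat.card ((CochainComplex.mappingCone f).homology i) : ℚ)⁻¹)) :=
  chi_tor_multiplicative_general f g hf N hfN hgN
end

section
/- If A_*, B_*, C_* are graded abelian groups with C_* finitely generated free and f_* : A_* → B_* is a graded map which is a rational isomorphism with finite kernel and cokernel in each degree, then χ^tor(f_* ⊗ id_{C_*}) = χ^tor(f_*)^{χ(C_*)}, where χ(C_*) is the Euler characteristic of C_* and χ^tor is the alternating product of the orders of the homology of the mapping cone. -/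
open DirectSum

section

variable {A B C : ℤ → Type} [∀ i, AddCommGroup (A i)] [∀ i, AddCommGroup (B i)]
  [∀ i, AddCommGroup (C i)]

/-- The degree-`n` piece of the graded map `f_* ⊗ id_{C_*}` on the graded tensor
product, `(A ⊗ C)_n = ⨁_j A_{n-j} ⊗ C_j → (B ⊗ C)_n = ⨁_j B_{n-j} ⊗ C_j`. -/
noncomputable def gradedTensorMap (f : ∀ i, A i →ₗ[ℤ] B i) (n : ℤ) :
    (⨁ j : ℤ, TensorProduct ℤ (A (n - j)) (C j)) →ₗ[ℤ]
      (⨁ j : ℤ, TensorProduct ℤ (B (n - j)) (C j)) :=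
  DFinsupp.mapRange.linearMap (fun j => TensorProduct.map (f (n - j)) LinearMap.id)

/-- The local factor `(|coker|/|ker|)^{(-1)^i}` of `χ^tor` of a linear map. -/
noncomputable def chiTorFactor {M N : Type*} [AddCommGroup M] [AddCommGroup N]
    [Module ℤ M] [Module ℤ N] (φ : M →ₗ[ℤ] N) (i : ℤ) : ℚ :=
  if Even i then (Nat.card (N ⧸ LinearMap.range φ) : ℚ) / (Nat.card (LinearMap.ker φ))
  else (Nat.card (LinearMap.ker φ) : ℚ) / (Nat.card (N ⧸ LinearMap.range φ))

end

/-! Both factors `|ker|` and `|coker|` are invariant under conjugation by isomorphisms and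
multiplicative over finite products of maps. A basis of `C_j` identifies `f_i ⊗ id_{C_j}` with
the `rank C_j`-fold product of `f_i`, and the degree-`n` piece of `f_* ⊗ id_{C_*}` is the product
over `j` of the `f_{n-j} ⊗ id_{C_j}`; passing from degree `n - j` to `n` inverts the factor exactly
when `j` is odd. Regrouping the resulting double product over `(n - j, j)` gives the formula. -/

section PiMap

variable {R ι : Type*} [Semiring R] {P Q : ι → Type*} [∀ j, AddCommMonoid (P j)]
  [∀ j, AddCommMonoid (Q j)] [∀ j, Module R (P j)] [∀ j, Module R (Q j)]

theorem LinearMap.card_ker_piMap [Fintype ι] (g : ∀ j, P j →ₗ[R] Q j) :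
    Nat.card (ker (piMap g)) = ∏ j, Nat.card (ker (g j)) := by
  rw [← Nat.card_pi]
  exact Nat.card_congr ((Equiv.subtypeEquivRight fun x => by simp [funext_iff]).trans
    Equiv.subtypePiEquivPi)

theorem LinearMap.range_piMap (g : ∀ j, P j →ₗ[R] Q j) :
    range (piMap g) = Submodule.pi Set.univ fun j => range (g j) :=
  SetLike.coe_injective (by simp only [Submodule.coe_pi, coe_range, coe_piMap, Set.range_piMap])

end PiMap

theorem LinearMap.card_coker_piMap {R ι : Type*} [CommRing R] [Fintype ι] {P Q : ι → Type*}
    [∀ j, AddCommGroup (P j)] [∀ j, AddCommGroup (Q j)] [∀ j, Module R (P j)]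
    [∀ j, Module R (Q j)] (g : ∀ j, P j →ₗ[R] Q j) :
    Nat.card ((∀ j, Q j) ⧸ range (piMap g)) = ∏ j, Nat.card (Q j ⧸ range (g j)) := by
  classical
  rw [range_piMap, ← Nat.card_pi]
  exact Nat.card_congr (Submodule.quotientPi fun j => range (g j)).toEquiv

section ChiTorFactor

variable {M N M' N' : Type*} [AddCommGroup M] [AddCommGroup N] [AddCommGroup M']
  [AddCommGroup N']

theorem chiTorFactor_congr (φ : M →ₗ[ℤ] N) (ψ : M' →ₗ[ℤ] N') (e₁ : M ≃ₗ[ℤ] M')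
    (e₂ : N ≃ₗ[ℤ] N') (h : ψ ∘ₗ e₁.toLinearMap = e₂.toLinearMap ∘ₗ φ) (i : ℤ) :
    chiTorFactor ψ i = chiTorFactor φ i := by
  have hker : Nat.card (LinearMap.ker ψ) = Nat.card (LinearMap.ker φ) := by
    have : LinearMap.ker φ = (LinearMap.ker ψ).comap e₁.toLinearMap := by
      rw [← LinearMap.ker_comp, h, LinearEquiv.ker_comp]
    rw [this, Submodule.comap_equiv_eq_map_symm]
    exact Nat.card_congr (e₁.symm.submoduleMap _).toEquiv
  have hcoker : Nat.card (N' ⧸ LinearMap.range ψ) = Nat.card (N ⧸ LinearMap.range φ) := by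
    have : (LinearMap.range φ).map e₂.toLinearMap = LinearMap.range ψ := by
      rw [← LinearMap.range_comp, ← h, LinearMap.range_comp_of_range_eq_top _ e₁.range]
    exact (Nat.card_congr (Submodule.Quotient.equiv _ _ e₂ this).toEquiv).symm
  simp only [chiTorFactor, hker, hcoker]

theorem chiTorFactor_piMap {ι : Type*} [Fintype ι] {P Q : ι → Type*} [∀ j, AddCommGroup (P j)]
    [∀ j, AddCommGroup (Q j)] (g : ∀ j, P j →ₗ[ℤ] Q j) (i : ℤ) :
    chiTorFactor (LinearMap.piMap g) i = ∏ j, chiTorFactor (g j) i := by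
  unfold chiTorFactor
  split_ifs <;> simp only [LinearMap.card_ker_piMap, LinearMap.card_coker_piMap, Nat.cast_prod,
    Finset.prod_div_distrib]

theorem chiTorFactor_of_subsingleton [Subsingleton M] [Subsingleton N] (φ : M →ₗ[ℤ] N) (i : ℤ) :
    chiTorFactor φ i = 1 := by
  rw [chiTorFactor, Nat.card_of_subsingleton (0 : LinearMap.ker φ),
    Nat.card_of_subsingleton (0 : N ⧸ LinearMap.range φ)]
  simp

theorem chiTorFactor_ne_zero (φ : M →ₗ[ℤ] N) [Finite (LinearMap.ker φ)]
    [Finite (N ⧸ LinearMap.range φ)] (i : ℤ) : chiTorFactor φ i ≠ 0 := by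
  have hker : (Nat.card (LinearMap.ker φ) : ℚ) ≠ 0 := Nat.cast_ne_zero.mpr Nat.card_pos.ne'
  have hcoker : (Nat.card (N ⧸ LinearMap.range φ) : ℚ) ≠ 0 :=
    Nat.cast_ne_zero.mpr Nat.card_pos.ne'
  unfold chiTorFactor
  split_ifs <;> exact div_ne_zero ‹_› ‹_›

theorem chiTorFactor_add (φ : M →ₗ[ℤ] N) (i j : ℤ) :
    chiTorFactor φ (i + j) = chiTorFactor φ i ^ (if Even j then 1 else -1 : ℤ) := by
  by_cases hi : Even i <;> by_cases hj : Even j <;> simp [chiTorFactor, Int.even_add, hi, hj]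

end ChiTorFactor

namespace TensorProduct

variable {R κ M N C : Type*} [CommRing R] [Fintype κ] [DecidableEq κ] [AddCommGroup M]
  [AddCommGroup N] [AddCommGroup C] [Module R M] [Module R N] [Module R C]

noncomputable def equivPiOfBasisRight (b : Module.Basis κ R C) (M : Type*)
    [AddCommGroup M] [Module R M] : M ⊗[R] C ≃ₗ[R] (κ → M) :=
  LinearEquiv.lTensor M b.equivFun ≪≫ₗ piScalarRight R R M κ

theorem piMap_comp_equivPiOfBasisRight (b : Module.Basis κ R C) (φ : M →ₗ[R] N) :
    LinearMap.piMap (fun _ => φ) ∘ₗ (equivPiOfBasisRight b M).toLinearMap =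
      (equivPiOfBasisRight b N).toLinearMap ∘ₗ φ.rTensor C :=
  ext' fun m c => funext fun _ => by simp [equivPiOfBasisRight]

end TensorProduct

theorem chiTorFactor_rTensor {M N : Type*} [AddCommGroup M] [AddCommGroup N] (C : Type*)
    [AddCommGroup C] [Module.Free ℤ C] [Module.Finite ℤ C] (φ : M →ₗ[ℤ] N) (i : ℤ) :
    chiTorFactor (φ.rTensor C) i = chiTorFactor φ i ^ Module.finrank ℤ C := by
  classical
  have h := chiTorFactor_congr _ _ _ _
    (TensorProduct.piMap_comp_equivPiOfBasisRight (Module.Free.chooseBasis ℤ C) φ) i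
  rw [chiTorFactor_piMap, Finset.prod_const, Finset.card_univ,
    ← Module.finrank_eq_card_chooseBasisIndex] at h
  exact h.symm

theorem chiTorFactor_rTensor_add {M N : Type*} [AddCommGroup M] [AddCommGroup N] (C : Type*)
    [AddCommGroup C] [Module.Free ℤ C] [Module.Finite ℤ C] (φ : M →ₗ[ℤ] N) (i j : ℤ) :
    chiTorFactor (φ.rTensor C) (i + j) = chiTorFactor φ i ^
      (if Even j then (Module.finrank ℤ C : ℤ) else -(Module.finrank ℤ C)) := by
  rw [chiTorFactor_rTensor, chiTorFactor_add, ← zpow_natCast, ← zpow_mul]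
  split_ifs <;> simp

noncomputable def DirectSum.linearEquivPiOfSubsingleton {ι R : Type*} [DecidableEq ι] [Semiring R]
    {M : ι → Type*} [∀ i, AddCommMonoid (M i)] [∀ i, Module R (M i)] (s : Finset ι)
    (h : ∀ i ∉ s, Subsingleton (M i)) : (⨁ i, M i) ≃ₗ[R] ∀ i : (s : Set ι), M i where
  toFun x i := x i
  invFun := DirectSum.mk M s
  map_add' _ _ := rfl
  map_smul' _ _ := rfl
  left_inv x := by
    ext i
    by_cases hi : i ∈ s
    · exact DirectSum.mk_apply_of_mem hi
    · exact @Subsingleton.elim _ (h i hi) _ _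
  right_inv v := funext fun i => DirectSum.mk_apply_of_mem i.2

theorem chiTorFactor_mapRange {ι : Type*} [DecidableEq ι] {M N : ι → Type*}
    [∀ j, AddCommGroup (M j)] [∀ j, AddCommGroup (N j)] (s : Finset ι)
    (hM : ∀ j ∉ s, Subsingleton (M j)) (hN : ∀ j ∉ s, Subsingleton (N j))
    (g : ∀ j, M j →ₗ[ℤ] N j) (i : ℤ) :
    chiTorFactor (DFinsupp.mapRange.linearMap g : (⨁ j, M j) →ₗ[ℤ] ⨁ j, N j) i =
      ∏ j ∈ s, chiTorFactor (g j) i := by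
  refine (chiTorFactor_congr _ (LinearMap.piMap fun j : (s : Set ι) => g j)
    (DirectSum.linearEquivPiOfSubsingleton s hM) (DirectSum.linearEquivPiOfSubsingleton s hN)
    rfl i).symm.trans ?_
  rw [chiTorFactor_piMap, ← Finset.prod_coe_sort s]
  rfl

theorem Finset.prod_comp_sub_eq_prod {G α : Type*} [AddGroup G] [CommMonoid α] {F : G → α}
    {s t : Finset G} (hF : Function.mulSupport F ⊆ s) (j : G) (hst : ∀ i ∈ s, i + j ∈ t) :
    ∏ n ∈ t, F (n - j) = ∏ i ∈ s, F i := by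
  have hFj : Function.mulSupport (fun n => F (n - j)) ⊆ t := fun n hn => by
    simpa using hst _ (hF hn)
  rw [← finprod_eq_prod_of_mulSupport_subset _ hF, ← finprod_eq_prod_of_mulSupport_subset _ hFj]
  exact finprod_comp_equiv (Equiv.subRight j)

theorem Finset.prod_zpow_eq_zpow_sum₀ {ι G₀ : Type*} [CommGroupWithZero G₀] (s : Finset ι)
    (e : ι → ℤ) {a : G₀} (ha : a ≠ 0) : ∏ i ∈ s, a ^ e i = a ^ ∑ i ∈ s, e i := by
  induction s using Finset.cons_induction with
  | empty => simp
  | cons k s hk ih => rw [prod_cons, sum_cons, ih, zpow_add₀ ha]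

theorem chiTorFactor_gradedTensorMap {A B C : ℤ → Type} [∀ i, AddCommGroup (A i)]
    [∀ i, AddCommGroup (B i)] [∀ i, AddCommGroup (C i)] [∀ j, Module.Free ℤ (C j)]
    [∀ j, Module.Finite ℤ (C j)] (f : ∀ i, A i →ₗ[ℤ] B i) (s : Finset ℤ)
    (hC : ∀ j ∉ s, Subsingleton (C j)) (n : ℤ) :
    chiTorFactor (gradedTensorMap (C := C) f n) n =
      ∏ j ∈ s, chiTorFactor (f (n - j)) (n - j) ^
        (if Even j then (Module.finrank ℤ (C j) : ℤ) else -(Module.finrank ℤ (C j))) := by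
  have hAC : ∀ j ∉ s, Subsingleton (TensorProduct ℤ (A (n - j)) (C j)) := fun j hj =>
    have := hC j hj; inferInstance
  have hBC : ∀ j ∉ s, Subsingleton (TensorProduct ℤ (B (n - j)) (C j)) := fun j hj =>
    have := hC j hj; inferInstance
  -- `trans` rather than `rw`: the `ℤ`-module structures on `⨁` and `⊗` are only defeq, not
  -- syntactically equal, to the ones the general lemmas are stated with.
  refine (chiTorFactor_mapRange s hAC hBC _ n).trans (Finset.prod_congr rfl fun j _ => ?_)
  have h := chiTorFactor_rTensor_add (C j) (f (n - j)) (n - j) j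
  rwa [sub_add_cancel] at h

/-- if `A_*, B_*, C_*` are graded abelian groups with `C_*` finitely
generated free, and `f_* : A_* → B_*` is a graded map which is a rational isomorphism
with finite kernel and cokernel in each degree (all graded pieces being trivial outside
a finite window), then `χ^tor(f_* ⊗ id_{C_*}) = χ^tor(f_*)^{χ(C_*)}`, where
`χ^tor(f_*) = ∏ᵢ (|coker f_i|/|ker f_i|)^{(-1)^i}` and `χ(C_*) = Σⱼ (-1)^j rank C_j`. -/
theorem chi_tor_tensor_free (A B C : ℤ → Type) [∀ i, AddCommGroup (A i)]
    [∀ i, AddCommGroup (B i)] [∀ i, AddCommGroup (C i)]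
    [∀ j, Module.Free ℤ (C j)] [∀ j, Module.Finite ℤ (C j)]
    (f : ∀ i, A i →ₗ[ℤ] B i)
    (hker : ∀ i, Finite (LinearMap.ker (f i)))
    (hcoker : ∀ i, Finite (B i ⧸ LinearMap.range (f i)))
    (N : ℕ)
    (hA : ∀ i : ℤ, N < i.natAbs → Subsingleton (A i))
    (hB : ∀ i : ℤ, N < i.natAbs → Subsingleton (B i))
    (hC : ∀ j : ℤ, N < j.natAbs → Subsingleton (C j)) :
    (∏ n ∈ Finset.Icc (-(2 * N : ℤ)) (2 * N),
        chiTorFactor (gradedTensorMap (C := C) f n) n) =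
      (∏ i ∈ Finset.Icc (-(N : ℤ)) N, chiTorFactor (f i) i) ^
        (∑ j ∈ Finset.Icc (-(N : ℤ)) N,
          (if Even j then (Module.finrank ℤ (C j) : ℤ) else -(Module.finrank ℤ (C j)))) := by
  set s := Finset.Icc (-(N : ℤ)) N
  have hout : ∀ i ∉ s, N < i.natAbs := fun i hi => by
    simp only [s, Finset.mem_Icc] at hi
    omega
  have hF : Function.mulSupport (fun i => chiTorFactor (f i) i) ⊆ s :=
    Function.mulSupport_subset_iff'.mpr fun i hi =>
      have := hA i (hout i hi); have := hB i (hout i hi); chiTorFactor_of_subsingleton _ _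
  have hne : ∏ i ∈ s, chiTorFactor (f i) i ≠ 0 := Finset.prod_ne_zero_iff.mpr fun i _ =>
    have := hker i; have := hcoker i; chiTorFactor_ne_zero (f i) i
  rw [Finset.prod_congr rfl fun n _ =>
      chiTorFactor_gradedTensorMap f s (fun j hj => hC j (hout j hj)) n,
    Finset.prod_comm, ← Finset.prod_zpow_eq_zpow_sum₀ _ _ hne]
  refine Finset.prod_congr rfl fun j hj => ?_
  rw [Finset.prod_zpow, Finset.prod_comp_sub_eq_prod hF j fun i hi => ?_]
  simp only [s, Finset.mem_Icc] at hi hj ⊢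
  omega
end
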